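/- arXiv:2310.10815 — 5 statements merged into one kernel-verified Lean document; each statement's English description precedes it below -/
import Mathlib

section
/- Let G be a weighted graph whose edges are totally ordered by distinct β-values, and let f partition V(G) into 4k² classes. The compact subgraph C_f(H) of a subgraph H contains, for each pair of distinct classes, only the heaviest edge of H between them; the reduced compact subgraph R_f(H) further keeps only edges among the 2k heaviest incident to each of its two endpoint classes, and then only the 4k² heaviest remaining edges. Then C_f(H) has a nice k-matching (a k-matching whose 2k vertices lie in 2k distinct classes) if and only if R_f(H) has a nice k-matching, and in that case the maximum weight of a nice k-matching is the same in both graphs. -/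
open Finset
open scoped Classical

/-- The compact subgraph `C_f(H)`: keep, for each pair of distinct classes of `f`,
only the `β`-heaviest edge of `H` between them. -/
noncomputable def compactSub {V α : Type*} (f : V → α) (β : Sym2 V → ℝ)
    (H : Finset (Sym2 V)) : Finset (Sym2 V) :=
  H.filter (fun e => ¬ (e.map f).IsDiag ∧ ∀ e' ∈ H, e'.map f = e.map f → β e' ≤ β e)

/-- `R_f'(H)`: keep only edges of `C_f(H)` that are among the `2k` `β`-heaviest edges
incident to each of their two endpoint classes. -/
noncomputable def reducedSub' {V α : Type*} (f : V → α) (β : Sym2 V → ℝ) (k : ℕ)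
    (H : Finset (Sym2 V)) : Finset (Sym2 V) :=
  (compactSub f β H).filter (fun e =>
    ∀ i, i ∈ e.map f →
      ((compactSub f β H).filter (fun e' => i ∈ e'.map f ∧ β e < β e')).card < 2 * k)

/-- The reduced compact subgraph `R_f(H)`: keep only the `4k²` `β`-heaviest edges
of `R_f'(H)`. -/
noncomputable def reducedSub {V α : Type*} (f : V → α) (β : Sym2 V → ℝ) (k : ℕ)
    (H : Finset (Sym2 V)) : Finset (Sym2 V) :=
  (reducedSub' f β k H).filter (fun e =>
    ((reducedSub' f β k H).filter (fun e' => β e < β e')).card < 4 * k ^ 2)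

/-- `M` is a nice `k`-matching w.r.t. `f`: `k` non-loop edges, pairwise sharing no
endpoints, and all its vertices lie in pairwise distinct classes of `f`. -/
def IsNiceKMatching {V α : Type*} (f : V → α) (k : ℕ) (M : Finset (Sym2 V)) : Prop :=
  M.card = k ∧ (∀ e ∈ M, ¬ e.IsDiag) ∧
    (∀ e ∈ M, ∀ e' ∈ M, e ≠ e' → ∀ v, v ∈ e → v ∉ e') ∧
    (∀ e ∈ M, ∀ e' ∈ M, ∀ u v, u ∈ e → v ∈ e' → u ≠ v → f u ≠ f v)

section Aux

variable {V α : Type*}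

lemma sym2_eq_of_mem {x y : α} {z : Sym2 α} (hx : x ∈ z) (hy : y ∈ z) (hxy : x ≠ y) :
    z = s(x, y) := by
  induction z using Sym2.ind with
  | _ a b =>
    rw [Sym2.mem_iff] at hx hy
    rcases hx with rfl | rfl <;> rcases hy with rfl | rfl
    · exact absurd rfl hxy
    · rfl
    · exact Sym2.eq_swap
    · exact absurd rfl hxy

lemma compact_inj (f : V → α) {β : Sym2 V → ℝ} (hβ : Function.Injective β)
    (H : Finset (Sym2 V)) :
    ∀ e₁ ∈ compactSub f β H, ∀ e₂ ∈ compactSub f β H, e₁.map f = e₂.map f → e₁ = e₂ := by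
  intro e₁ h₁ e₂ h₂ h
  rw [compactSub, mem_filter] at h₁ h₂
  exact hβ (le_antisymm (h₂.2.2 e₁ h₁.1 h) (h₁.2.2 e₂ h₂.1 h.symm))

noncomputable def classesOf [Fintype α] (f : V → α) (N : Finset (Sym2 V)) : Finset α :=
  N.biUnion fun e => univ.filter (· ∈ e.map f)

lemma mem_classesOf [Fintype α] {f : V → α} {N : Finset (Sym2 V)} {c : α} :
    c ∈ classesOf f N ↔ ∃ e ∈ N, c ∈ e.map f := by
  simp [classesOf]

lemma card_classesOf_le [Fintype α] (f : V → α) (N : Finset (Sym2 V)) :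
    (classesOf f N).card ≤ N.card * 2 := by
  refine Finset.card_biUnion_le_card_mul _ _ 2 ?_
  intro e _
  induction e using Sym2.ind with
  | _ a b =>
    refine le_trans (card_le_card (t := ({f a, f b} : Finset α)) (fun x hx => ?_)) ?_
    · simp only [mem_filter, Sym2.map_pair_eq, Sym2.mem_iff] at hx
      simp [hx.2]
    · exact le_trans (card_insert_le _ ({f b} : Finset α)) (by simp)

lemma exchange_nice [DecidableEq V] (f : V → α) {k : ℕ} {M : Finset (Sym2 V)}
    (hM : IsNiceKMatching f k M) {e e' : Sym2 V} (he : e ∈ M)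
    (hd' : ¬ (e'.map f).IsDiag)
    (hdisj : ∀ c ∈ e'.map f, ∀ e₂ ∈ M.erase e, c ∉ e₂.map f) :
    e' ∉ M.erase e ∧ IsNiceKMatching f k (insert e' (M.erase e)) := by
  obtain ⟨hcard, hnd, hdis, hcl⟩ := hM
  have hmemmap : ∀ (z : Sym2 V) (v : V), v ∈ z → f v ∈ z.map f :=
    fun z v hv => Sym2.mem_map.2 ⟨v, hv, rfl⟩
  have hx : ∃ c, c ∈ e'.map f := by
    induction e' using Sym2.ind with
    | _ a b => exact ⟨f a, by rw [Sym2.map_pair_eq, Sym2.mem_iff]; left; rfl⟩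
  obtain ⟨c₀, hc₀⟩ := hx
  have hne : e' ∉ M.erase e := fun h => hdisj c₀ hc₀ e' h hc₀
  refine ⟨hne, ?_, ?_, ?_, ?_⟩
  · rw [card_insert_of_notMem hne, card_erase_of_mem he, hcard]
    have : 1 ≤ k := by
      rw [← hcard]; exact card_pos.2 ⟨e, he⟩
    omega
  · intro e₂ h₂
    rcases mem_insert.1 h₂ with rfl | h₂
    · intro hdiag
      apply hd'
      induction e₂ using Sym2.ind with
      | _ a b =>
        rw [Sym2.mk_isDiag_iff] at hdiag
        subst hdiag
        rw [Sym2.map_pair_eq, Sym2.mk_isDiag_iff]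
    · exact hnd e₂ (mem_of_mem_erase h₂)
  · intro e₁ h₁ e₂ h₂ hne12 v hv1 hv2
    rcases mem_insert.1 h₁ with h₁e | h₁m <;> rcases mem_insert.1 h₂ with h₂e | h₂m
    · exact hne12 (h₁e.trans h₂e.symm)
    · exact hdisj (f v) (by rw [← h₁e]; exact hmemmap _ _ hv1) e₂ h₂m (hmemmap _ _ hv2)
    · exact hdisj (f v) (by rw [← h₂e]; exact hmemmap _ _ hv2) e₁ h₁m (hmemmap _ _ hv1)
    · exact hdis e₁ (mem_of_mem_erase h₁m) e₂ (mem_of_mem_erase h₂m) hne12 v hv1 hv2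
  · intro e₁ h₁ e₂ h₂ u v hu hv huv
    rcases mem_insert.1 h₁ with h₁e | h₁m <;> rcases mem_insert.1 h₂ with h₂e | h₂m
    · intro hf
      apply hd'
      have hv' : v ∈ e₁ := by rw [h₁e, ← h₂e]; exact hv
      rw [← h₁e, sym2_eq_of_mem hu hv' huv, Sym2.map_pair_eq, Sym2.mk_isDiag_iff]
      exact hf
    · intro hf
      exact hdisj (f u) (by rw [← h₁e]; exact hmemmap _ _ hu) e₂ h₂m
        (by rw [hf]; exact hmemmap _ _ hv)
    · intro hf
      exact hdisj (f v) (by rw [← h₂e]; exact hmemmap _ _ hv) e₁ h₁m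
        (by rw [← hf]; exact hmemmap _ _ hu)
    · exact hcl e₁ (mem_of_mem_erase h₁m) e₂ (mem_of_mem_erase h₂m) u v hu hv huv

end Aux

section Exch
variable {V α : Type*}

lemma exists_exchange [DecidableEq V] [Fintype α] (f : V → α) {β : Sym2 V → ℝ}
    (hβ : Function.Injective β) {k : ℕ} (H : Finset (Sym2 V)) {M : Finset (Sym2 V)}
    (hMC : M ⊆ compactSub f β H) (hM : IsNiceKMatching f k M) {e : Sym2 V} (he : e ∈ M)
    (heR : e ∉ reducedSub f β k H) :
    ∃ e' ∈ compactSub f β H, β e < β e' ∧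
      ∀ c ∈ e'.map f, ∀ e₂ ∈ M.erase e, c ∉ e₂.map f := by
  have heC : e ∈ compactSub f β H := hMC he
  have hk1 : 1 ≤ k := hM.1 ▸ card_pos.2 ⟨e, he⟩
  have hForb : (classesOf f (M.erase e)).card ≤ (k - 1) * 2 := by
    have := card_classesOf_le f (M.erase e)
    rwa [card_erase_of_mem he, hM.1] at this
  have heForb : ∀ c ∈ e.map f, c ∉ classesOf f (M.erase e) := by
    intro c hc hcF
    rw [mem_classesOf] at hcF
    obtain ⟨e₂, h₂, hc₂⟩ := hcF
    obtain ⟨u, hu, hfu⟩ := Sym2.mem_map.1 hc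
    obtain ⟨v, hv, hfv⟩ := Sym2.mem_map.1 hc₂
    have hne : e₂ ≠ e := ne_of_mem_erase h₂
    have huv : u ∉ e₂ := hM.2.2.1 e he e₂ (mem_of_mem_erase h₂) hne.symm u hu
    have huv' : u ≠ v := fun h => huv (h ▸ hv)
    exact hM.2.2.2 e he e₂ (mem_of_mem_erase h₂) u v hu hv huv' (by rw [hfu, hfv])
  have hclass : ∀ e' : Sym2 V, (∀ c ∈ e'.map f, c ∉ classesOf f (M.erase e)) →
      ∀ c ∈ e'.map f, ∀ e₂ ∈ M.erase e, c ∉ e₂.map f := by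
    intro e' h c hc e₂ h₂ hc₂
    exact h c hc (mem_classesOf.2 ⟨e₂, h₂, hc₂⟩)
  by_cases heR' : e ∈ reducedSub' f β k H
  · -- Case B : e ∈ R' but fails the 4k² condition
    have hR'C : reducedSub' f β k H ⊆ compactSub f β H := by
      intro x hx
      simp only [reducedSub', mem_filter] at hx
      exact hx.1
    have hE₀card : 4 * k ^ 2 ≤
        ((reducedSub' f β k H).filter (fun e' => β e < β e')).card := by
      by_contra h
      rw [not_le] at h
      apply heR
      simp only [reducedSub, mem_filter]
      exact ⟨heR', h⟩
    have hS : ∀ c : α,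
        ((reducedSub' f β k H).filter (fun e' => c ∈ e'.map f ∧ β e < β e')).card
          ≤ 2 * k := by
      intro c
      by_cases hne :
        ((reducedSub' f β k H).filter (fun e' => c ∈ e'.map f ∧ β e < β e')).Nonempty
      · obtain ⟨m, hm, hmin⟩ := exists_min_image _ β hne
        have hm' := mem_filter.1 hm
        have hmR' := hm'.1
        simp only [reducedSub', mem_filter] at hmR'
        have hbound := hmR'.2 c hm'.2.1
        have hsub :
            ((reducedSub' f β k H).filter
                (fun e' => c ∈ e'.map f ∧ β e < β e')).erase m ⊆
              (compactSub f β H).filter (fun e' => c ∈ e'.map f ∧ β m < β e') := by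
          intro x hx
          have hxm := mem_filter.1 (mem_of_mem_erase hx)
          refine mem_filter.2 ⟨hR'C hxm.1, hxm.2.1, ?_⟩
          exact lt_of_le_of_ne (hmin x (mem_of_mem_erase hx))
            (fun h => ne_of_mem_erase hx (hβ h.symm))
        have h1 := card_le_card hsub
        have h2 := card_erase_of_mem hm
        omega
      · rw [not_nonempty_iff_eq_empty] at hne
        rw [hne]
        simp
    have hsplit := card_filter_add_card_filter_not
      (s := (reducedSub' f β k H).filter (fun e' => β e < β e'))
      (p := fun e' => ∀ c ∈ e'.map f, c ∉ classesOf f (M.erase e))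
    have hneg : ((reducedSub' f β k H).filter (fun e' => β e < β e')).filter
          (fun e' => ¬ ∀ c ∈ e'.map f, c ∉ classesOf f (M.erase e)) ⊆
        (classesOf f (M.erase e)).biUnion
          (fun c => (reducedSub' f β k H).filter
            (fun e' => c ∈ e'.map f ∧ β e < β e')) := by
      intro x hx
      have hx' := mem_filter.1 hx
      have hxE := mem_filter.1 hx'.1
      have hx2 := hx'.2
      push_neg at hx2
      obtain ⟨c, hc, hcF⟩ := hx2
      exact mem_biUnion.2 ⟨c, hcF, mem_filter.2 ⟨hxE.1, hc, hxE.2⟩⟩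
    have hnegcard : (((reducedSub' f β k H).filter (fun e' => β e < β e')).filter
          (fun e' => ¬ ∀ c ∈ e'.map f, c ∉ classesOf f (M.erase e))).card ≤
        (k - 1) * 2 * (2 * k) := by
      refine le_trans (card_le_card hneg) (le_trans
        (card_biUnion_le_card_mul _ _ (2 * k) (fun c _ => hS c)) ?_)
      exact Nat.mul_le_mul_right _ hForb
    have hAne : (((reducedSub' f β k H).filter (fun e' => β e < β e')).filter
        (fun e' => ∀ c ∈ e'.map f, c ∉ classesOf f (M.erase e))).Nonempty := by
      rw [← card_pos]
      obtain ⟨m, rfl⟩ : ∃ m, k = m + 1 := ⟨k - 1, by omega⟩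
      have hlt : (m + 1 - 1) * 2 * (2 * (m + 1)) < 4 * (m + 1) ^ 2 := by
        have h4 : 4 * (m + 1) ^ 2 = 4 * m * m + 8 * m + 4 := by ring
        have h5 : (m + 1 - 1) * 2 * (2 * (m + 1)) = 4 * m * m + 4 * m := by
          simp only [Nat.add_sub_cancel]; ring
        omega
      omega
    obtain ⟨e', he'⟩ := hAne
    have hu1 := mem_filter.1 he'
    have hu2 := mem_filter.1 hu1.1
    exact ⟨e', hR'C hu2.1, hu2.2, hclass e' hu1.2⟩
  · -- Case A : e fails the 2k-heaviest-per-class condition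
    have hfail : ¬ ∀ i ∈ e.map f,
        ((compactSub f β H).filter
          (fun e' => i ∈ e'.map f ∧ β e < β e')).card < 2 * k := by
      intro h
      apply heR'
      simp only [reducedSub', mem_filter]
      exact ⟨heC, h⟩
    push_neg at hfail
    obtain ⟨i, hi, h2k⟩ := hfail
    have hiF : i ∉ classesOf f (M.erase e) := heForb i hi
    by_contra hno
    push_neg at hno
    have hall : ∀ e' : Sym2 V, ∃ c,
        e' ∈ (compactSub f β H).filter (fun x => i ∈ x.map f ∧ β e < β x) →
          c ∈ e'.map f ∧ c ∈ classesOf f (M.erase e) := by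
      intro e'
      by_cases h : e' ∈ (compactSub f β H).filter
          (fun x => i ∈ x.map f ∧ β e < β x)
      · have h' := mem_filter.1 h
        obtain ⟨c, hc, e₂, h₂, hc₂⟩ := hno e' h'.1 h'.2.2
        exact ⟨c, fun _ => ⟨hc, mem_classesOf.2 ⟨e₂, h₂, hc₂⟩⟩⟩
      · obtain ⟨c, hc⟩ : ∃ c, c ∈ e'.map f := by
          induction e' using Sym2.ind with
          | _ a b => exact ⟨f a, by rw [Sym2.map_pair_eq, Sym2.mem_iff]; left; rfl⟩
        exact ⟨c, fun hmem => absurd hmem h⟩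
    choose g hg using hall
    have hinj : Set.InjOn g
        ↑((compactSub f β H).filter (fun x => i ∈ x.map f ∧ β e < β x)) := by
      intro e₁ h₁ e₂ h₂ hg12
      simp only [Finset.mem_coe] at h₁ h₂
      obtain ⟨hc₁, hF₁⟩ := hg e₁ h₁
      obtain ⟨hc₂, hF₂⟩ := hg e₂ h₂
      have h₁' := mem_filter.1 h₁
      have h₂' := mem_filter.1 h₂
      have hne₁ : i ≠ g e₁ := fun h => hiF (h ▸ hF₁)
      have hne₂ : i ≠ g e₂ := fun h => hiF (h ▸ hF₂)
      refine compact_inj f hβ H e₁ h₁'.1 e₂ h₂'.1 ?_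
      rw [sym2_eq_of_mem h₁'.2.1 hc₁ hne₁, sym2_eq_of_mem h₂'.2.1 hc₂ hne₂, hg12]
    have hcard := Finset.card_le_card_of_injOn g (fun x hx => (hg x hx).2) hinj
    omega

end Exch

section Main
variable {V α : Type*}

lemma to_reduced [DecidableEq V] [Fintype α] (f : V → α) {β wt : Sym2 V → ℝ}
    (hβ : Function.Injective β)
    (hβwt : ∀ e e' : Sym2 V, wt e < wt e' → β e < β e') {k : ℕ}
    (H : Finset (Sym2 V)) {M : Finset (Sym2 V)}
    (hMC : M ⊆ compactSub f β H) (hM : IsNiceKMatching f k M) :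
    ∃ M' ⊆ reducedSub f β k H, IsNiceKMatching f k M' ∧
      ∑ e ∈ M, wt e ≤ ∑ e ∈ M', wt e := by
  have hMT : M ∈ (compactSub f β H).powerset.filter
      (fun N => IsNiceKMatching f k N ∧ ∑ e ∈ M, wt e ≤ ∑ e ∈ N, wt e) :=
    mem_filter.2 ⟨mem_powerset.2 hMC, hM, le_refl _⟩
  obtain ⟨N, hNT, hNmax⟩ := exists_max_image _ (fun N => ∑ e ∈ N, β e) ⟨M, hMT⟩
  have hN' := mem_filter.1 hNT
  have hNC : N ⊆ compactSub f β H := mem_powerset.1 hN'.1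
  have hNnice := hN'.2.1
  have hNwt := hN'.2.2
  refine ⟨N, ?_, hNnice, hNwt⟩
  intro e he
  by_contra heR
  obtain ⟨e', he'C, he'β, he'disj⟩ := exists_exchange f hβ H hNC hNnice he heR
  have hd' : ¬ (e'.map f).IsDiag := by
    have h := he'C
    simp only [compactSub, mem_filter] at h
    exact h.2.1
  obtain ⟨hnotmem, hnice⟩ := exchange_nice f hNnice he hd' he'disj
  have hwt : wt e ≤ wt e' := by
    by_contra h
    rw [not_le] at h
    exact absurd (hβwt _ _ h) (not_lt.2 (le_of_lt he'β))
  have hsubC : insert e' (N.erase e) ⊆ compactSub f β H := by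
    intro x hx
    rcases mem_insert.1 hx with rfl | hx
    · exact he'C
    · exact hNC (mem_of_mem_erase hx)
  have hwtN' : ∑ x ∈ M, wt x ≤ ∑ x ∈ insert e' (N.erase e), wt x := by
    rw [sum_insert hnotmem, Finset.sum_erase_eq_sub he]
    linarith
  have hmem : insert e' (N.erase e) ∈ (compactSub f β H).powerset.filter
      (fun N' => IsNiceKMatching f k N' ∧ ∑ e ∈ M, wt e ≤ ∑ e ∈ N', wt e) :=
    mem_filter.2 ⟨mem_powerset.2 hsubC, hnice, hwtN'⟩
  have hβsum := hNmax _ hmem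
  rw [sum_insert hnotmem, Finset.sum_erase_eq_sub he] at hβsum
  linarith

lemma reduced_subset_compact [Fintype α] (f : V → α) (β : Sym2 V → ℝ) (k : ℕ)
    (H : Finset (Sym2 V)) : reducedSub f β k H ⊆ compactSub f β H := by
  intro x hx
  simp only [reducedSub, mem_filter] at hx
  have hx' := hx.1
  simp only [reducedSub', mem_filter] at hx'
  exact hx'.1

end Main

/-- `C_f(H)` has a nice `k`-matching iff `R_f(H)` does, and in that case
the maximum weight of a nice `k`-matching is the same in both graphs. -/
theorem stmt0 {V : Type*} [Fintype V] [DecidableEq V] (k : ℕ)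
    (G : SimpleGraph V) (wt : Sym2 V → ℝ) (β : Sym2 V → ℝ)
    (hβinj : Function.Injective β)
    (hβwt : ∀ e e' : Sym2 V, wt e < wt e' → β e < β e')
    (f : V → Fin (4 * k ^ 2))
    (H : Finset (Sym2 V)) (hH : (↑H : Set (Sym2 V)) ⊆ G.edgeSet) :
    ((∃ M ⊆ compactSub f β H, IsNiceKMatching f k M) ↔
      (∃ M ⊆ reducedSub f β k H, IsNiceKMatching f k M)) ∧
    ((∃ M ⊆ compactSub f β H, IsNiceKMatching f k M) →
      sSup {w : ℝ | ∃ M ⊆ compactSub f β H, IsNiceKMatching f k M ∧ ∑ e ∈ M, wt e = w} =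
      sSup {w : ℝ | ∃ M ⊆ reducedSub f β k H, IsNiceKMatching f k M ∧ ∑ e ∈ M, wt e = w}) := by
  have hRC := reduced_subset_compact f β k H
  constructor
  · constructor
    · rintro ⟨M, hMC, hM⟩
      obtain ⟨M', hM'R, hM'n, -⟩ := to_reduced f hβinj hβwt H hMC hM (wt := wt)
      exact ⟨M', hM'R, hM'n⟩
    · rintro ⟨M, hMR, hM⟩
      exact ⟨M, fun x hx => hRC (hMR hx), hM⟩
  · rintro ⟨M₀, hM₀C, hM₀⟩
    set WC := {w : ℝ | ∃ M ⊆ compactSub f β H, IsNiceKMatching f k M ∧ ∑ e ∈ M, wt e = w}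
      with hWC
    set WR := {w : ℝ | ∃ M ⊆ reducedSub f β k H, IsNiceKMatching f k M ∧ ∑ e ∈ M, wt e = w}
      with hWR
    have hsubrange : ∀ (W : Set ℝ), W ⊆ Set.range (fun N : Finset (Sym2 V) => ∑ e ∈ N, wt e)
        → BddAbove W := fun W hsub =>
      ((Set.finite_range _).subset hsub).bddAbove
    have hWCb : BddAbove WC := hsubrange WC (by
      rintro w ⟨M, _, _, hw⟩; exact ⟨M, hw⟩)
    have hWRb : BddAbove WR := hsubrange WR (by
      rintro w ⟨M, _, _, hw⟩; exact ⟨M, hw⟩)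
    have hWRsubWC : WR ⊆ WC := by
      rintro w ⟨M, hMR, hMn, hw⟩
      exact ⟨M, fun x hx => hRC (hMR hx), hMn, hw⟩
    have hWCne : WC.Nonempty := ⟨∑ e ∈ M₀, wt e, M₀, hM₀C, hM₀, rfl⟩
    have hWRne : WR.Nonempty := by
      obtain ⟨M', hM'R, hM'n, -⟩ := to_reduced f hβinj hβwt H hM₀C hM₀ (wt := wt)
      exact ⟨∑ e ∈ M', wt e, M', hM'R, hM'n, rfl⟩
    refine le_antisymm ?_ (csSup_le_csSup hWCb hWRne hWRsubWC)
    refine csSup_le hWCne ?_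
    rintro w ⟨M, hMC, hMn, rfl⟩
    obtain ⟨M', hM'R, hM'n, hle⟩ := to_reduced f hβinj hβwt H hMC hMn (wt := wt)
    exact le_trans hle (le_csSup hWRb ⟨M', hM'R, hM'n, rfl⟩)
end

section
/- Let S ⊆ U with |S| = k ≥ 2, and let f be chosen uniformly at random from a ⌈12 ln k⌉-wise independent family of hash functions from U to {0,…,d₁−1}, where d₁ = 2^d is the smallest power of 2 with k/ln k ≤ 2^d. For j ∈ {0,…,d₁−1} let X_j = |{x ∈ S : f(x) = j}|. Then for each fixed j, Pr[X_j ≥ 13 ln k] ≤ 1/k⁴, and hence by the union bound, Pr[∃ j : X_j ≥ 13 ln k] ≤ d₁/k⁴ ≤ 2/(k³ ln k). -/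
open Finset
open scoped Classical

/-- let `F` be a `⌈12 ln k⌉`-wise independent family of hash functions from
`U` to `{0,…,d₁−1}`, where `d₁ = 2^d` is the smallest power of two with `k/ln k ≤ 2^d`,
and let `S ⊆ U` with `|S| = k ≥ 2`. For a uniformly random member of the family and
`X_j = |{x ∈ S : f(x) = j}|`: for each fixed `j`, `Pr[X_j ≥ 13 ln k] ≤ 1/k⁴`, and by the
union bound `Pr[∃ j, X_j ≥ 13 ln k] ≤ d₁/k⁴ ≤ 2/(k³ ln k)`. -/
theorem stmt6 {U ι : Type*} [DecidableEq U] [Fintype ι]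
    (k d d₁ : ℕ) (hk : 2 ≤ k)
    (hd₁ : d₁ = 2 ^ d)
    (hlow : (k : ℝ) / Real.log k ≤ (d₁ : ℝ))
    (hmin : ∀ d' : ℕ, d' < d → ((2 : ℝ) ^ d' < (k : ℝ) / Real.log k))
    (F : ι → U → Fin d₁)
    (hind : ∀ κ' ≤ ⌈12 * Real.log k⌉₊, ∀ x : Fin κ' → U, Function.Injective x →
      ∀ a : Fin κ' → Fin d₁,
        ((Finset.univ : Finset ι).filter (fun i => ∀ t, F i (x t) = a t)).card * d₁ ^ κ'
          = Fintype.card ι)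
    (S : Finset U) (hS : S.card = k) :
    (∀ j : Fin d₁,
      (((Finset.univ : Finset ι).filter (fun i =>
          13 * Real.log k ≤ ((S.filter (fun x => F i x = j)).card : ℝ))).card : ℝ)
        * (k : ℝ) ^ 4 ≤ (Fintype.card ι : ℝ)) ∧
    ((((Finset.univ : Finset ι).filter (fun i => ∃ j : Fin d₁,
          13 * Real.log k ≤ ((S.filter (fun x => F i x = j)).card : ℝ))).card : ℝ)
        ≤ (d₁ : ℝ) / (k : ℝ) ^ 4 * (Fintype.card ι : ℝ)) ∧
    (d₁ : ℝ) / (k : ℝ) ^ 4 ≤ 2 / ((k : ℝ) ^ 3 * Real.log k) := by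
  have hk1 : (1:ℝ) < (k:ℝ) := by exact_mod_cast lt_of_lt_of_le one_lt_two hk
  have hk0 : (0:ℝ) < (k:ℝ) := lt_trans one_pos hk1
  have hlog : 0 < Real.log k := Real.log_pos hk1
  have hd₁pos : (0:ℝ) < (d₁:ℝ) := by
    have : 0 < d₁ := hd₁ ▸ Nat.pow_pos (n := d) (by norm_num : 0 < 2)
    exact_mod_cast this
  set m := ⌈4 * Real.log k⌉₊ with hm
  set T := ⌈13 * Real.log k⌉₊ with hT
  have hmT : m ≤ T := Nat.ceil_le_ceil (by nlinarith)
  have hmκ : m ≤ ⌈12 * Real.log k⌉₊ := Nat.ceil_le_ceil (by nlinarith)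
  have part1 : ∀ j : Fin d₁,
      (((Finset.univ : Finset ι).filter (fun i =>
          13 * Real.log k ≤ ((S.filter (fun x => F i x = j)).card : ℝ))).card : ℝ)
        * (k : ℝ) ^ 4 ≤ (Fintype.card ι : ℝ) := by
    intro j
    set B := (Finset.univ : Finset ι).filter (fun i =>
      13 * Real.log k ≤ ((S.filter (fun x => F i x = j)).card : ℝ)) with hB
    have key : ∀ A ∈ S.powersetCard m,
        ((Finset.univ : Finset ι).filter (fun i : ι => ∀ u ∈ A, F i u = j)).card * d₁ ^ m
          = Fintype.card ι := by
      intro A hA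
      obtain ⟨hAS, hAc⟩ := Finset.mem_powersetCard.1 hA
      have hlen : A.toList.length = m := by rw [Finset.length_toList, hAc]
      set x : Fin m → U := fun t => A.toList.get (Fin.cast hlen.symm t) with hx
      have hxinj : Function.Injective x := by
        intro s t hst
        have := List.nodup_iff_injective_get.1 A.nodup_toList hst
        simpa [Fin.ext_iff] using this
      have hxmem : ∀ u, u ∈ A ↔ ∃ t, x t = u := by
        intro u
        constructor
        · intro hu
          obtain ⟨t, ht⟩ := List.get_of_mem (Finset.mem_toList.2 hu)
          exact ⟨Fin.cast hlen t, by simp only [hx]; simpa using ht⟩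
        · rintro ⟨t, rfl⟩
          exact Finset.mem_toList.1 (by exact A.toList.get_mem _)
      have heq : (Finset.univ : Finset ι).filter (fun i : ι => ∀ u ∈ A, F i u = j)
          = (Finset.univ : Finset ι).filter (fun i : ι => ∀ t, F i (x t) = j) := by
        apply Finset.filter_congr
        intro i _
        constructor
        · intro h t
          exact h _ ((hxmem _).2 ⟨t, rfl⟩)
        · intro h u hu
          obtain ⟨t, rfl⟩ := (hxmem u).1 hu
          exact h t
      rw [heq]
      exact hind m hmκ x hxinj (fun _ => j)
    have sum_id : (∑ i : ι, ((S.filter (fun u => F i u = j)).card.choose m)) * d₁ ^ m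
        = k.choose m * Fintype.card ι := by
      have step1 : ∀ i : ι, (S.filter (fun u => F i u = j)).card.choose m
          = ((S.powersetCard m).filter (fun A => ∀ u ∈ A, F i u = j)).card := by
        intro i
        rw [← Finset.card_powersetCard]
        congr 1
        ext A
        simp only [Finset.mem_powersetCard, Finset.mem_filter]
        constructor
        · rintro ⟨hsub, hc⟩
          have h1 : A ⊆ S := fun u hu => (Finset.mem_filter.1 (hsub hu)).1
          exact ⟨⟨h1, hc⟩, fun u hu => (Finset.mem_filter.1 (hsub hu)).2⟩
        · rintro ⟨⟨h1, hc⟩, h2⟩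
          exact ⟨fun u hu => Finset.mem_filter.2 ⟨h1 hu, h2 u hu⟩, hc⟩
      calc (∑ i : ι, ((S.filter (fun u => F i u = j)).card.choose m)) * d₁ ^ m
          = (∑ i : ι,
              ((S.powersetCard m).filter (fun A => ∀ u ∈ A, F i u = j)).card) * d₁ ^ m := by
            rw [Finset.sum_congr rfl (fun i _ => step1 i)]
        _ = (∑ A ∈ S.powersetCard m,
              ((Finset.univ : Finset ι).filter (fun i : ι => ∀ u ∈ A, F i u = j)).card)
              * d₁ ^ m := by
            simp_rw [Finset.card_filter]
            rw [Finset.sum_comm]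
        _ = ∑ A ∈ S.powersetCard m,
              ((Finset.univ : Finset ι).filter (fun i : ι => ∀ u ∈ A, F i u = j)).card
              * d₁ ^ m := by rw [Finset.sum_mul]
        _ = ∑ _A ∈ S.powersetCard m, Fintype.card ι := Finset.sum_congr rfl key
        _ = k.choose m * Fintype.card ι := by
            rw [Finset.sum_const, Finset.card_powersetCard, hS, smul_eq_mul]
    have hTle : ∀ i ∈ B, T ≤ (S.filter (fun u => F i u = j)).card := by
      intro i hi
      exact Nat.ceil_le.2 (Finset.mem_filter.1 hi).2
    by_cases hmk : m ≤ k
    · -- main case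
      have bound1 : B.card * T.choose m
          ≤ ∑ i : ι, ((S.filter (fun u => F i u = j)).card.choose m) := by
        calc B.card * T.choose m = ∑ _i ∈ B, T.choose m := by
              rw [Finset.sum_const, smul_eq_mul]
          _ ≤ ∑ i ∈ B, ((S.filter (fun u => F i u = j)).card.choose m) :=
              Finset.sum_le_sum (fun i hi => Nat.choose_le_choose m (hTle i hi))
          _ ≤ ∑ i : ι, ((S.filter (fun u => F i u = j)).card.choose m) :=
              Finset.sum_le_sum_of_subset (Finset.filter_subset _ _)
      have nat_ineq : B.card * T.choose m * d₁ ^ m ≤ k.choose m * Fintype.card ι := by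
        rw [← sum_id]
        exact Nat.mul_le_mul_right _ bound1
      have hdesc : B.card * T.descFactorial m * d₁ ^ m
          ≤ k.descFactorial m * Fintype.card ι := by
        calc B.card * T.descFactorial m * d₁ ^ m
            = Nat.factorial m * (B.card * T.choose m * d₁ ^ m) := by
              rw [Nat.descFactorial_eq_factorial_mul_choose]; ring
          _ ≤ Nat.factorial m * (k.choose m * Fintype.card ι) := Nat.mul_le_mul_left _ nat_ineq
          _ = k.descFactorial m * Fintype.card ι := by
              rw [Nat.descFactorial_eq_factorial_mul_choose]; ring
      have hR : (B.card : ℝ) * (T.descFactorial m : ℝ) * (d₁:ℝ) ^ m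
          ≤ (k.descFactorial m : ℝ) * (Fintype.card ι : ℝ) := by exact_mod_cast hdesc
      have hTreal : (13:ℝ) * Real.log k ≤ (T:ℝ) := Nat.le_ceil _
      have hmreal_le : (m:ℝ) ≤ 4 * Real.log k + 1 :=
        le_of_lt (Nat.ceil_lt_add_one (by positivity))
      have hmreal_ge : 4 * Real.log k ≤ (m:ℝ) := Nat.le_ceil _
      have hsub9 : (9:ℝ) * Real.log k ≤ ((T + 1 - m : ℕ) : ℝ) := by
        have hle : m ≤ T + 1 := hmT.trans (Nat.le_succ _)
        rw [Nat.cast_sub hle]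
        push_cast
        linarith
      have hpow9 : (k:ℝ)^4 ≤ (9:ℝ) ^ m := by
        have h1 : (k:ℝ)^4 = Real.exp (4 * Real.log k) := by
          have h0 : (4:ℝ) * Real.log k = Real.log ((k:ℝ)^(4:ℕ)) := by
            rw [Real.log_pow]; norm_num
          rw [h0, Real.exp_log (by positivity)]
        have h2 : Real.exp (4 * Real.log k) ≤ Real.exp (m:ℝ) :=
          Real.exp_le_exp.2 hmreal_ge
        have h3 : Real.exp (m:ℝ) = Real.exp 1 ^ m := by
          rw [← Real.exp_nat_mul]; norm_num
        have h4 : Real.exp 1 ^ m ≤ (9:ℝ) ^ m := by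
          apply pow_le_pow_left₀ (le_of_lt (Real.exp_pos 1))
          exact le_of_lt (lt_trans Real.exp_one_lt_d9 (by norm_num))
        rw [h1]
        calc Real.exp (4 * Real.log k) ≤ Real.exp (m:ℝ) := h2
          _ = Real.exp 1 ^ m := h3
          _ ≤ (9:ℝ) ^ m := h4
      have hkd : (k:ℝ) ≤ Real.log k * (d₁:ℝ) := by
        rw [div_le_iff₀ hlog] at hlow
        linarith [hlow]
      have hanal : (k:ℝ)^4 * (k.descFactorial m : ℝ)
          ≤ (T.descFactorial m : ℝ) * (d₁:ℝ) ^ m := by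
        have e1 : (k.descFactorial m : ℝ) ≤ (k:ℝ)^m := by
          exact_mod_cast Nat.descFactorial_le_pow k m
        have e2 : (((T + 1 - m : ℕ):ℝ))^m ≤ (T.descFactorial m : ℝ) := by
          exact_mod_cast Nat.pow_sub_le_descFactorial T m
        calc (k:ℝ)^4 * (k.descFactorial m : ℝ)
            ≤ (9:ℝ)^m * (k:ℝ)^m := by
              have := mul_le_mul hpow9 e1 (by positivity) (by positivity)
              linarith
          _ = ((9:ℝ) * k)^m := by rw [mul_pow]
          _ ≤ ((9 * Real.log k) * (d₁:ℝ))^m := by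
              apply pow_le_pow_left₀ (by positivity)
              nlinarith
          _ ≤ (((T + 1 - m : ℕ):ℝ) * (d₁:ℝ))^m := by
              apply pow_le_pow_left₀ (by positivity)
              exact mul_le_mul_of_nonneg_right hsub9 (le_of_lt hd₁pos)
          _ = (((T + 1 - m : ℕ):ℝ))^m * (d₁:ℝ)^m := by rw [mul_pow]
          _ ≤ (T.descFactorial m : ℝ) * (d₁:ℝ)^m :=
              mul_le_mul_of_nonneg_right e2 (by positivity)
      have hdfpos : (0:ℝ) < (k.descFactorial m : ℝ) := by
        have : k.descFactorial m ≠ 0 := by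
          intro h
          exact absurd (Nat.descFactorial_eq_zero_iff_lt.1 h) (not_lt.2 hmk)
        exact_mod_cast Nat.pos_of_ne_zero this
      have : (B.card : ℝ) * (k:ℝ)^4 * (k.descFactorial m : ℝ)
          ≤ (Fintype.card ι : ℝ) * (k.descFactorial m : ℝ) := by
        calc (B.card : ℝ) * (k:ℝ)^4 * (k.descFactorial m : ℝ)
            = (B.card : ℝ) * ((k:ℝ)^4 * (k.descFactorial m : ℝ)) := by ring
          _ ≤ (B.card : ℝ) * ((T.descFactorial m : ℝ) * (d₁:ℝ)^m) :=
              mul_le_mul_of_nonneg_left hanal (by positivity)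
          _ = (B.card : ℝ) * (T.descFactorial m : ℝ) * (d₁:ℝ)^m := by ring
          _ ≤ (k.descFactorial m : ℝ) * (Fintype.card ι : ℝ) := hR
          _ = (Fintype.card ι : ℝ) * (k.descFactorial m : ℝ) := by ring
      exact le_of_mul_le_mul_right this hdfpos
    · -- degenerate case : B is empty
      have hBempty : B = ∅ := by
        rw [Finset.eq_empty_iff_forall_notMem]
        intro i hi
        have h1 : T ≤ (S.filter (fun u => F i u = j)).card := hTle i hi
        have h2 : (S.filter (fun u => F i u = j)).card ≤ k := hS ▸ Finset.card_filter_le S _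
        omega
      rw [hBempty]
      simp
  refine ⟨part1, ?_, ?_⟩
  · -- union bound
    have hsub : (Finset.univ : Finset ι).filter (fun i => ∃ j : Fin d₁,
          13 * Real.log k ≤ ((S.filter (fun x => F i x = j)).card : ℝ))
        ⊆ (Finset.univ : Finset (Fin d₁)).biUnion (fun j =>
          (Finset.univ : Finset ι).filter (fun i =>
            13 * Real.log k ≤ ((S.filter (fun x => F i x = j)).card : ℝ))) := by
      intro i hi
      obtain ⟨j, hj⟩ := (Finset.mem_filter.1 hi).2
      exact Finset.mem_biUnion.2 ⟨j, Finset.mem_univ _,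
        Finset.mem_filter.2 ⟨Finset.mem_univ _, hj⟩⟩
    have hcard : ((Finset.univ : Finset ι).filter (fun i => ∃ j : Fin d₁,
          13 * Real.log k ≤ ((S.filter (fun x => F i x = j)).card : ℝ))).card
        ≤ ∑ j : Fin d₁, ((Finset.univ : Finset ι).filter (fun i =>
            13 * Real.log k ≤ ((S.filter (fun x => F i x = j)).card : ℝ))).card :=
      (Finset.card_le_card hsub).trans Finset.card_biUnion_le
    have hstep : ∀ j : Fin d₁,
        (((Finset.univ : Finset ι).filter (fun i =>
          13 * Real.log k ≤ ((S.filter (fun x => F i x = j)).card : ℝ))).card : ℝ)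
        ≤ (Fintype.card ι : ℝ) / (k:ℝ)^4 := by
      intro j
      rw [le_div_iff₀ (by positivity)]
      exact part1 j
    calc (((Finset.univ : Finset ι).filter (fun i => ∃ j : Fin d₁,
          13 * Real.log k ≤ ((S.filter (fun x => F i x = j)).card : ℝ))).card : ℝ)
        ≤ ∑ j : Fin d₁, (((Finset.univ : Finset ι).filter (fun i =>
            13 * Real.log k ≤ ((S.filter (fun x => F i x = j)).card : ℝ))).card : ℝ) := by
          exact_mod_cast hcard
      _ ≤ ∑ _j : Fin d₁, (Fintype.card ι : ℝ) / (k:ℝ)^4 :=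
          Finset.sum_le_sum (fun j _ => hstep j)
      _ = (d₁ : ℝ) * ((Fintype.card ι : ℝ) / (k:ℝ)^4) := by
          rw [Finset.sum_const, Finset.card_univ, Fintype.card_fin, nsmul_eq_mul]
      _ = (d₁ : ℝ) / (k : ℝ) ^ 4 * (Fintype.card ι : ℝ) := by ring
  · -- d₁ / k^4 ≤ 2 / (k^3 log k)
    have hd₁log : (d₁:ℝ) * Real.log k ≤ 2 * k := by
      rcases Nat.eq_zero_or_pos d with hd0 | hdpos
      · subst hd0
        have : d₁ = 1 := by simpa using hd₁
        rw [this]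
        have := Real.log_le_sub_one_of_pos hk0
        push_cast
        linarith
      · obtain ⟨d', rfl⟩ := Nat.exists_eq_add_of_lt hdpos
        have h := hmin d' (by omega)
        rw [lt_div_iff₀ hlog] at h
        have hd₁eq : (d₁:ℝ) = 2 * (2:ℝ)^d' := by
          rw [hd₁]
          push_cast
          rw [show 0 + d' + 1 = d' + 1 by omega, pow_succ]
          ring
        rw [hd₁eq]
        nlinarith
    rw [div_le_div_iff₀ (by positivity) (by positivity)]
    nlinarith [mul_le_mul_of_nonneg_right hd₁log (le_of_lt (pow_pos hk0 3))]
end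

section
/- Let {X₁,…,X_j} be 0-1 random variables with X = Σᵢ Xᵢ and μ = E[X]. If δ ≥ 1 and the variables are ⌈μδ⌉-wise independent, then Pr[X ≥ μ(1+δ)] ≤ e^{−μδ/3}; if 0 < δ < 1 and the variables are ⌈μδ⌉-wise independent, then Pr[X ≥ μ(1+δ)] ≤ e^{−μδ²/3}. -/
open MeasureTheory

lemma log_ineq (x : ℝ) (hx : 0 ≤ x) : 2*x/(2+x) ≤ Real.log (1+x) := by
  set f : ℝ → ℝ := fun y => Real.log (1+y) - 2*y/(2+y) with hf
  have hder : ∀ y ∈ interior (Set.Ici (0:ℝ)), HasDerivAt f (1/(1+y) - 4/(2+y)^2) y := by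
    intro y hy
    rw [interior_Ici] at hy
    have hy0 : (0:ℝ) < y := hy
    have h1 : HasDerivAt (fun z : ℝ => Real.log (1+z)) (1/(1+y)) y := by
      have h : HasDerivAt (fun z : ℝ => 1+z) 1 y := (hasDerivAt_id y).const_add 1
      have h3 := (Real.hasDerivAt_log (by linarith : (1:ℝ)+y ≠ 0)).comp y h
      rw [mul_one] at h3
      rw [one_div]
      exact h3
    have h2 : HasDerivAt (fun z : ℝ => 2*z/(2+z)) (4/(2+y)^2) y := by
      have hn : HasDerivAt (fun z : ℝ => 2*z) 2 y := by
        simpa using (hasDerivAt_id y).const_mul (2:ℝ)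
      have hd : HasDerivAt (fun z : ℝ => 2+z) 1 y := (hasDerivAt_id y).const_add 2
      have h := hn.div hd (by linarith : (2:ℝ)+y ≠ 0)
      rw [show (4:ℝ)/(2+y)^2 = (2*(2+y) - 2*y*1)/(2+y)^2 by ring]
      exact h
    exact h1.sub h2
  have hcont : ContinuousOn f (Set.Ici 0) := by
    apply ContinuousOn.sub
    · apply ContinuousOn.log (by fun_prop)
      intro y hy
      have : (0:ℝ) ≤ y := hy
      positivity
    · apply ContinuousOn.div (by fun_prop) (by fun_prop)
      intro y hy
      have : (0:ℝ) ≤ y := hy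
      positivity
  have hmono : MonotoneOn f (Set.Ici 0) := by
    apply monotoneOn_of_deriv_nonneg (convex_Ici 0) hcont
    · exact fun y hy => (hder y hy).differentiableAt.differentiableWithinAt
    · intro y hy
      rw [(hder y hy).deriv]
      rw [interior_Ici] at hy
      have hy0 : (0:ℝ) < y := hy
      rw [sub_nonneg, div_le_div_iff₀ (by positivity) (by linarith)]
      nlinarith
  have := hmono (Set.self_mem_Ici) (hx : x ∈ Set.Ici 0) hx
  simp only [hf] at this
  norm_num at this
  linarith



lemma aux_binom (n : ℕ) (a b : ℝ) (ha : 0 ≤ a) (hb : 0 ≤ b) :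
    a ^ (n+1) + (n+1) * b * a ^ n ≤ (a + b) ^ (n+1) := by
  induction n with
  | zero => simp
  | succ n ih =>
    have h2 : (a+b) * (a ^ (n+1) + ((n:ℝ)+1) * b * a ^ n) ≤ (a+b) * (a+b)^(n+1) := by
      apply mul_le_mul_of_nonneg_left ih (by linarith)
    have hpow : 0 ≤ a ^ n := pow_nonneg ha n
    push_cast
    calc a^(n+1+1) + ((n:ℝ)+1+1)*b*a^(n+1)
        ≤ (a+b)*(a^(n+1) + ((n:ℝ)+1)*b*a^n) := by
          have e : (a+b)*(a^(n+1) + ((n:ℝ)+1)*b*a^n)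
              = a^(n+1+1) + ((n:ℝ)+1+1)*b*a^(n+1) + ((n:ℝ)+1)*(b*b)*a^n := by ring
          have hnn : 0 ≤ ((n:ℝ)+1)*(b*b)*a^n :=
            mul_nonneg (mul_nonneg (by positivity) (mul_nonneg hb hb)) hpow
          linarith
      _ ≤ (a+b)*(a+b)^(n+1) := h2
      _ = (a+b)^(n+1+1) := by ring

lemma esymm_le {α : Type*} [DecidableEq α] (s : Finset α) (p : α → ℝ) (hp : ∀ i, 0 ≤ p i) :
    ∀ k : ℕ, (k.factorial : ℝ) * ∑ T ∈ s.powersetCard k, ∏ i ∈ T, p i ≤ (∑ i ∈ s, p i) ^ k := by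
  classical
  induction s using Finset.induction_on with
  | empty =>
    intro k
    cases k with
    | zero => simp
    | succ k =>
      rw [show ((∅ : Finset α).powersetCard (k+1)) = ∅ by simp]
      simp
  | @insert a s ha ih =>
    intro k
    have hS : 0 ≤ ∑ i ∈ s, p i := Finset.sum_nonneg fun i _ => hp i
    cases k with
    | zero => simp
    | succ k =>
      have hdisj : Disjoint (s.powersetCard (k+1)) ((s.powersetCard k).image (insert a)) := by
        rw [Finset.disjoint_right]
        intro T hT hT'
        obtain ⟨U, hU, rfl⟩ := Finset.mem_image.1 hT
        exact ha ((Finset.mem_powersetCard.1 hT').1 (Finset.mem_insert_self a U))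
      have hinj : ∀ T ∈ s.powersetCard k, ∀ U ∈ s.powersetCard k,
          insert a T = insert a U → T = U := by
        intro T hT U hU h
        have hat : a ∉ T := fun h' => ha ((Finset.mem_powersetCard.1 hT).1 h')
        have hau : a ∉ U := fun h' => ha ((Finset.mem_powersetCard.1 hU).1 h')
        have h1 : (insert a T).erase a = (insert a U).erase a := by rw [h]
        rwa [Finset.erase_insert hat, Finset.erase_insert hau] at h1
      rw [Finset.powersetCard_succ_insert ha, Finset.sum_union hdisj, Finset.sum_image hinj]
      have him : ∀ T ∈ s.powersetCard k, ∏ i ∈ insert a T, p i = p a * ∏ i ∈ T, p i := by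
        intro T hT
        have : a ∉ T := fun h => ha ((Finset.mem_powersetCard.1 hT).1 h)
        rw [Finset.prod_insert this]
      rw [Finset.sum_congr rfl him, ← Finset.mul_sum, Finset.sum_insert ha]
      have key1 := ih (k+1)
      have key2 := ih k
      have hfac : ((k+1).factorial : ℝ) = ((k:ℝ)+1) * k.factorial := by
        push_cast [Nat.factorial_succ]; ring
      have hb := aux_binom k (∑ i ∈ s, p i) (p a) hS (hp a)
      rw [show (∑ i ∈ s, p i) + p a = p a + ∑ i ∈ s, p i from add_comm _ _] at hb
      have hsum2 : 0 ≤ ∑ T ∈ s.powersetCard (k+1), ∏ i ∈ T, p i :=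
        Finset.sum_nonneg fun T _ => Finset.prod_nonneg fun i _ => hp i
      have hpa := hp a
      have hint := mul_le_mul_of_nonneg_left key2
        (mul_nonneg (by positivity : (0:ℝ) ≤ (k:ℝ)+1) (hp a))
      calc ((k+1).factorial : ℝ) * ((∑ T ∈ s.powersetCard (k+1), ∏ i ∈ T, p i)
              + p a * ∑ T ∈ s.powersetCard k, ∏ i ∈ T, p i)
          = ((k+1).factorial : ℝ) * (∑ T ∈ s.powersetCard (k+1), ∏ i ∈ T, p i)
            + (((k:ℝ)+1) * p a) * ((k.factorial : ℝ) * ∑ T ∈ s.powersetCard k, ∏ i ∈ T, p i) := by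
            rw [hfac]; ring
        _ ≤ (∑ i ∈ s, p i)^(k+1) + (((k:ℝ)+1) * p a) * (∑ i ∈ s, p i)^k :=
            add_le_add key1 hint
        _ ≤ (p a + ∑ i ∈ s, p i)^(k+1) := by nlinarith [hb]



lemma lemA (c δ B : ℝ) (hc : 0 < c) (hδ : 0 < δ)
    (hB : B ≤ δ * (c * δ + 1) / (2 + δ)) :
    c ^ (⌈c*δ⌉₊) ≤ Real.exp (-B) * ((⌈c*(1+δ)⌉₊ : ℕ).descFactorial ⌈c*δ⌉₊ : ℝ) := by
  set k := ⌈c*δ⌉₊ with hkdef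
  set M := ⌈c*(1+δ)⌉₊ with hMdef
  have hcd : 0 < c * δ := mul_pos hc hδ
  have hks : (c*δ) ≤ k := Nat.le_ceil _
  have hks' : (k:ℝ) < c*δ + 1 := by
    have := Nat.ceil_lt_add_one (le_of_lt hcd)
    exact this
  have hkM : k ≤ M := Nat.ceil_le_ceil (by nlinarith)
  have hM : c*(1+δ) ≤ M := Nat.le_ceil _
  -- descFactorial as real product
  have hcast : ((M.descFactorial k : ℕ) : ℝ) = ∏ t ∈ Finset.range k, ((M:ℝ) - t) := by
    rw [Nat.descFactorial_eq_prod_range, Nat.cast_prod]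
    apply Finset.prod_congr rfl
    intro t ht
    have : t ≤ M := le_trans (le_of_lt (Finset.mem_range.1 ht)) hkM
    push_cast [Nat.cast_sub this]
    ring
  rw [hcast]
  -- per-factor bound
  have hfac : ∀ t ∈ Finset.range k,
      c ≤ Real.exp (-(2/(2+δ)) * (δ - t/c)) * ((M:ℝ) - t) := by
    intro t ht
    have htk : (t:ℝ) < k := by exact_mod_cast Finset.mem_range.1 ht
    have htc : (t:ℝ) < c * δ := by
      have : (t:ℝ) ≤ (k:ℝ) - 1 := by
        have : (t:ℕ) + 1 ≤ k := Finset.mem_range.1 ht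
        have := Nat.cast_le (α := ℝ) |>.2 this
        push_cast at this
        linarith
      linarith
    set x := δ - t/c with hxdef
    have hx0 : 0 < x := by
      rw [hxdef, sub_pos, div_lt_iff₀ hc]
      linarith [htc]
    have hxδ : x ≤ δ := by
      rw [hxdef]
      have : 0 ≤ (t:ℝ)/c := div_nonneg (Nat.cast_nonneg t) hc.le
      linarith
    have key : Real.exp ((2/(2+δ)) * x) ≤ 1 + x := by
      have h1 : (2/(2+δ)) * x ≤ 2*x/(2+x) := by
        rw [div_mul_eq_mul_div, div_le_div_iff₀ (by linarith) (by linarith)]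
        nlinarith
      calc Real.exp ((2/(2+δ)) * x) ≤ Real.exp (2*x/(2+x)) := Real.exp_le_exp.2 h1
        _ ≤ Real.exp (Real.log (1+x)) := Real.exp_le_exp.2 (log_ineq x hx0.le)
        _ = 1 + x := Real.exp_log (by linarith)
    have hMt : c * (1 + x) ≤ (M:ℝ) - t := by
      have : c * (1+x) = c*(1+δ) - t := by
        rw [hxdef]; field_simp; ring
      linarith [hM]
    calc c = Real.exp (-(2/(2+δ)) * x) * (Real.exp ((2/(2+δ)) * x) * c) := by
          rw [← mul_assoc, ← Real.exp_add]; simp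
      _ ≤ Real.exp (-(2/(2+δ)) * x) * ((1+x) * c) := by
          apply mul_le_mul_of_nonneg_left _ (Real.exp_nonneg _)
          exact mul_le_mul_of_nonneg_right key hc.le
      _ ≤ Real.exp (-(2/(2+δ)) * x) * ((M:ℝ) - t) := by
          apply mul_le_mul_of_nonneg_left _ (Real.exp_nonneg _)
          calc (1+x)*c = c*(1+x) := mul_comm _ _
            _ ≤ (M:ℝ) - t := hMt
  -- multiply over t
  have hprod : c ^ k ≤ ∏ t ∈ Finset.range k,
      (Real.exp (-(2/(2+δ)) * (δ - t/c)) * ((M:ℝ) - t)) := by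
    calc c ^ k = ∏ _t ∈ Finset.range k, c := by rw [Finset.prod_const, Finset.card_range]
      _ ≤ _ := Finset.prod_le_prod (fun t _ => hc.le) hfac
  rw [Finset.prod_mul_distrib, ← Real.exp_sum] at hprod
  -- sum of exponents
  have hsum : ∑ t ∈ Finset.range k, (-(2/(2+δ)) * (δ - (t:ℝ)/c))
      = -(2/(2+δ)) * ((k:ℝ)*δ - (k:ℝ)*((k:ℝ)-1)/(2*c)) := by
    rw [← Finset.mul_sum]
    congr 1
    rw [Finset.sum_sub_distrib, Finset.sum_const, Finset.card_range]
    rw [show ∑ t ∈ Finset.range k, (t:ℝ)/c = (∑ t ∈ Finset.range k, (t:ℝ))/c by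
      rw [Finset.sum_div]]
    have hk1 : 1 ≤ k := Nat.ceil_pos.mpr hcd
    have : ∑ t ∈ Finset.range k, (t:ℝ) = (k:ℝ)*((k:ℝ)-1)/2 := by
      have h2 := Finset.sum_range_id_mul_two k
      have h4 : (((∑ i ∈ Finset.range k, i) * 2 : ℕ) : ℝ) = ((k * (k-1) : ℕ) : ℝ) := by
        exact_mod_cast congrArg (Nat.cast (R := ℝ)) h2
      push_cast [Nat.cast_sub hk1] at h4
      linarith
    rw [this]
    ring_nf
  rw [hsum] at hprod
  -- compare exponents
  have hexp : Real.exp (-(2/(2+δ)) * ((k:ℝ)*δ - (k:ℝ)*((k:ℝ)-1)/(2*c))) ≤ Real.exp (-B) := by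
    apply Real.exp_le_exp.2
    have e1 : (2/(2+δ)) * ((k:ℝ)*δ - (k:ℝ)*((k:ℝ)-1)/(2*c))
        = ((k:ℝ)*(2*(c*δ) - (k:ℝ) + 1))/(c*(2+δ)) := by
      field_simp
      ring
    have hkey : (c*δ)*((c*δ)+1) ≤ (k:ℝ)*(2*(c*δ) - (k:ℝ) + 1) := by
      nlinarith [mul_nonneg (sub_nonneg.2 hks) (sub_nonneg.2 (le_of_lt hks'))]
    have h5 : δ*(c*δ+1)/(2+δ) ≤ (2/(2+δ)) * ((k:ℝ)*δ - (k:ℝ)*((k:ℝ)-1)/(2*c)) := by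
      rw [e1]
      calc δ*(c*δ+1)/(2+δ) = ((c*δ)*((c*δ)+1))/(c*(2+δ)) := by
            field_simp
        _ ≤ ((k:ℝ)*(2*(c*δ) - (k:ℝ) + 1))/(c*(2+δ)) :=
            div_le_div_of_nonneg_right hkey (by positivity) |>.trans_eq rfl
    linarith [hB, h5]
  calc c ^ k ≤ Real.exp (-(2/(2+δ)) * ((k:ℝ)*δ - (k:ℝ)*((k:ℝ)-1)/(2*c)))
        * ∏ t ∈ Finset.range k, ((M:ℝ) - t) := hprod
    _ ≤ Real.exp (-B) * ∏ t ∈ Finset.range k, ((M:ℝ) - t) := by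
        apply mul_le_mul_of_nonneg_right hexp
        apply Finset.prod_nonneg
        intro t ht
        have htk : (t:ℝ) < k := by exact_mod_cast Finset.mem_range.1 ht
        have : (k:ℝ) ≤ M := by exact_mod_cast hkM
        linarith


open MeasureTheory


/-- Chernoff bound under limited independence: if `X = Σᵢ Xᵢ` is a sum of
0-1 random variables with mean `μ' = E[X]` that are `⌈μ'δ⌉`-wise independent, then
`Pr[X ≥ μ'(1+δ)] ≤ e^{−μ'δ/3}` for `δ ≥ 1` and `≤ e^{−μ'δ²/3}` for `0 < δ < 1`. -/
theorem stmt7 {Ω : Type*} [MeasurableSpace Ω] (μ : Measure Ω) [IsProbabilityMeasure μ]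
    (j : ℕ) (X : Fin j → Ω → ℝ) (hmeas : ∀ i, Measurable (X i))
    (h01 : ∀ i ω, X i ω = 0 ∨ X i ω = 1)
    (δ : ℝ) (hδ : 0 < δ)
    (mu : ℝ) (hmu : mu = ∫ ω, (∑ i, X i ω) ∂μ)
    (hind : ∀ J : Finset (Fin j), J.card ≤ ⌈mu * δ⌉₊ →
      ∀ x : Fin j → ℝ,
        μ {ω | ∀ i ∈ J, X i ω = x i} = ∏ i ∈ J, μ {ω | X i ω = x i}) :
    (1 ≤ δ →
      (μ {ω | mu * (1 + δ) ≤ ∑ i, X i ω}).toReal ≤ Real.exp (-(mu * δ) / 3)) ∧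
    (δ < 1 →
      (μ {ω | mu * (1 + δ) ≤ ∑ i, X i ω}).toReal ≤ Real.exp (-(mu * δ ^ 2) / 3)) := by
  classical
  set p : Fin j → ℝ := fun i => (μ {ω | X i ω = 1}).toReal with hp
  have hpnn : ∀ i, 0 ≤ p i := fun i => ENNReal.toReal_nonneg
  -- indicator representation of products
  have hApre : ∀ (T : Finset (Fin j)),
      {ω | ∀ i ∈ T, X i ω = 1} = ⋂ i ∈ (T : Set (Fin j)), (X i) ⁻¹' {1} := by
    intro T; ext ω; simp
  have hAmeas : ∀ (T : Finset (Fin j)), MeasurableSet {ω | ∀ i ∈ T, X i ω = 1} := by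
    intro T
    rw [hApre]
    exact MeasurableSet.biInter (Set.to_countable _)
      (fun i _ => (hmeas i) (measurableSet_singleton 1))
  have hprodind : ∀ (T : Finset (Fin j)) (ω : Ω),
      ∏ i ∈ T, X i ω = Set.indicator {ω | ∀ i ∈ T, X i ω = 1} (fun _ => (1:ℝ)) ω := by
    intro T ω
    simp only [Set.indicator_apply, Set.mem_setOf_eq]
    by_cases h : ∀ i ∈ T, X i ω = 1
    · rw [if_pos h, Finset.prod_eq_one h]
    · rw [if_neg h]
      push_neg at h
      obtain ⟨i, hi, hne⟩ := h
      have : X i ω = 0 := (h01 i ω).resolve_right hne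
      exact Finset.prod_eq_zero hi this
  have hintind : ∀ (T : Finset (Fin j)),
      Integrable (Set.indicator {ω | ∀ i ∈ T, X i ω = 1} (fun _ => (1:ℝ))) μ := by
    intro T
    rw [integrable_indicator_iff (hAmeas T)]
    exact integrableOn_const (measure_ne_top μ _)
  have hXind : ∀ i, X i = Set.indicator {ω | X i ω = 1} (fun _ => (1:ℝ)) := by
    intro i
    funext ω
    have := hprodind {i} ω
    simpa using this
  have hXint : ∀ i, Integrable (X i) μ := by
    intro i
    rw [hXind i]
    exact (integrable_indicator_iff ((hmeas i) (measurableSet_singleton 1))).2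
      (integrableOn_const (measure_ne_top μ _))
  have hInt : ∀ i, ∫ ω, X i ω ∂μ = p i := by
    intro i
    have hms : MeasurableSet {ω | X i ω = 1} := (hmeas i) (measurableSet_singleton 1)
    conv_lhs => rw [hXind i]
    rw [integral_indicator_const (1:ℝ) hms]
    simp [hp, smul_eq_mul, measureReal_def]
  have hsum_p : ∑ i, p i = mu := by
    rw [hmu, integral_finset_sum _ (fun i _ => hXint i)]
    exact Finset.sum_congr rfl fun i _ => (hInt i).symm
  have hmu0 : 0 ≤ mu := by
    rw [← hsum_p]
    exact Finset.sum_nonneg fun i _ => hpnn i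
  have hXnn : ∀ i ω, 0 ≤ X i ω := by
    intro i ω
    rcases h01 i ω with h | h <;> rw [h] <;> norm_num
  set E := {ω | mu * (1 + δ) ≤ ∑ i, X i ω} with hE
  have hEmeas : MeasurableSet E := by
    rw [hE]
    exact measurableSet_le measurable_const
      (Finset.measurable_sum _ (fun i _ => hmeas i))
  have hprob : (μ E).toReal ≤ 1 := by
    rw [← ENNReal.toReal_one]
    exact ENNReal.toReal_mono (by simp) prob_le_one
  rcases hmu0.eq_or_lt with hmz | hmupos
  · exact ⟨fun hδ1 => by rw [← hmz]; simpa using hprob, fun hδ1 => by rw [← hmz]; simpa using hprob⟩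
  -- main case
  set k := ⌈mu*δ⌉₊ with hkdef
  set M := ⌈mu*(1+δ)⌉₊ with hMdef
  have hkM : k ≤ M := Nat.ceil_le_ceil (by nlinarith)
  set G : Ω → ℝ := fun ω => ∑ T ∈ Finset.powersetCard k Finset.univ, ∏ i ∈ T, X i ω with hG
  have hGind : G = fun ω => ∑ T ∈ Finset.powersetCard k Finset.univ,
      Set.indicator {ω | ∀ i ∈ T, X i ω = 1} (fun _ => (1:ℝ)) ω :=
    funext fun ω => Finset.sum_congr rfl (fun T _ => hprodind T ω)
  have hGint : Integrable G μ := by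
    rw [hGind]
    exact integrable_finset_sum _ (fun T _ => hintind T)
  have hGnn : ∀ ω, 0 ≤ G ω :=
    fun ω => Finset.sum_nonneg fun T _ => Finset.prod_nonneg fun i _ => hXnn i ω
  have hones : ∀ ω, ∑ i, X i ω = ((Finset.univ.filter (fun i => X i ω = 1)).card : ℝ) := by
    intro ω
    calc ∑ i, X i ω = ∑ i, (if X i ω = 1 then (1:ℝ) else 0) :=
          Finset.sum_congr rfl fun i _ => by rcases h01 i ω with h | h <;> simp [h]
      _ = _ := by rw [Finset.sum_boole]
  have hGcount : ∀ ω, G ω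
      = (((Finset.univ.filter (fun i => X i ω = 1)).card.choose k : ℕ) : ℝ) := by
    intro ω
    rw [hG]
    calc ∑ T ∈ Finset.powersetCard k Finset.univ, ∏ i ∈ T, X i ω
        = ∑ T ∈ Finset.powersetCard k Finset.univ,
            (if T ⊆ Finset.univ.filter (fun i => X i ω = 1) then (1:ℝ) else 0) := by
          apply Finset.sum_congr rfl
          intro T _
          by_cases h : T ⊆ Finset.univ.filter (fun i => X i ω = 1)
          · rw [if_pos h, Finset.prod_eq_one]
            intro i hi
            exact (Finset.mem_filter.1 (h hi)).2
          · rw [if_neg h]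
            obtain ⟨i, hi, hni⟩ := Finset.not_subset.1 h
            apply Finset.prod_eq_zero hi
            have : ¬ X i ω = 1 := fun hx => hni (Finset.mem_filter.2 ⟨Finset.mem_univ i, hx⟩)
            exact (h01 i ω).resolve_right this
      _ = (((Finset.powersetCard k Finset.univ).filter
            (fun T => T ⊆ Finset.univ.filter (fun i => X i ω = 1))).card : ℝ) := by
          rw [Finset.sum_boole]
      _ = _ := by
          congr 2
          rw [← Finset.card_powersetCard]
          congr 1
          ext T
          simp only [Finset.mem_filter, Finset.mem_powersetCard]
          constructor
          · rintro ⟨⟨-, hc⟩, hsub⟩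
            exact ⟨hsub, hc⟩
          · rintro ⟨hsub, hc⟩
            exact ⟨⟨Finset.subset_univ T, hc⟩, hsub⟩
  have hstep1 : (μ E).toReal * ((M.choose k : ℕ):ℝ) ≤ ∫ ω, G ω ∂μ := by
    have h1 : ∀ ω ∈ E, ((M.choose k : ℕ):ℝ) ≤ G ω := by
      intro ω hω
      have hω' : mu * (1 + δ) ≤ ∑ i, X i ω := hω
      rw [hones ω] at hω'
      have hMle : M ≤ (Finset.univ.filter (fun i => X i ω = 1)).card := by
        rw [hMdef]
        exact Nat.ceil_le.2 hω'
      rw [hGcount ω]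
      exact_mod_cast Nat.choose_le_choose k hMle
    calc (μ E).toReal * ((M.choose k : ℕ):ℝ)
        = ∫ _ in E, ((M.choose k : ℕ):ℝ) ∂μ := by rw [setIntegral_const, smul_eq_mul, measureReal_def]
      _ ≤ ∫ ω in E, G ω ∂μ := setIntegral_mono_on
          (integrableOn_const (measure_ne_top μ _)) hGint.integrableOn hEmeas h1
      _ ≤ ∫ ω, G ω ∂μ := setIntegral_le_integral hGint (Filter.Eventually.of_forall hGnn)
  have hstep2 : ∫ ω, G ω ∂μ = ∑ T ∈ Finset.powersetCard k Finset.univ, ∏ i ∈ T, p i := by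
    rw [hGind, integral_finset_sum _ (fun T _ => hintind T)]
    apply Finset.sum_congr rfl
    intro T hT
    rw [integral_indicator_const (1:ℝ) (hAmeas T), smul_eq_mul, mul_one]
    have hcard : T.card ≤ ⌈mu*δ⌉₊ := le_of_eq ((Finset.mem_powersetCard.1 hT).2.trans hkdef)
    have hT1 : μ {ω | ∀ i ∈ T, X i ω = 1} = ∏ i ∈ T, μ {ω | X i ω = 1} := by
      simpa using hind T hcard (fun _ => 1)
    rw [measureReal_def, hT1, ENNReal.toReal_prod]
  have hstep3 := esymm_le Finset.univ p hpnn k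
  have hdesc : ((M.descFactorial k : ℕ):ℝ) = (k.factorial : ℝ) * ((M.choose k : ℕ):ℝ) := by
    rw [Nat.descFactorial_eq_factorial_mul_choose]
    push_cast
    ring
  have hdescpos : (0:ℝ) < ((M.descFactorial k : ℕ):ℝ) := by
    rw [hdesc]
    have h1 : 0 < M.choose k := Nat.choose_pos hkM
    have h2 : 0 < k.factorial := Nat.factorial_pos k
    positivity
  have hchain : (μ E).toReal * ((M.descFactorial k : ℕ):ℝ) ≤ mu ^ k := by
    rw [hdesc]
    calc (μ E).toReal * ((k.factorial : ℝ) * ((M.choose k : ℕ):ℝ))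
        = (k.factorial : ℝ) * ((μ E).toReal * ((M.choose k : ℕ):ℝ)) := by ring
      _ ≤ (k.factorial : ℝ) * ∫ ω, G ω ∂μ :=
          mul_le_mul_of_nonneg_left hstep1 (by positivity)
      _ = (k.factorial : ℝ) * ∑ T ∈ Finset.powersetCard k Finset.univ, ∏ i ∈ T, p i := by
          rw [hstep2]
      _ ≤ (∑ i, p i) ^ k := hstep3
      _ = mu ^ k := by rw [hsum_p]
  have final : ∀ B : ℝ, B ≤ δ*(mu*δ+1)/(2+δ) → (μ E).toReal ≤ Real.exp (-B) := by
    intro B hB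
    have h := lemA mu δ B hmupos hδ hB
    rw [← hkdef, ← hMdef] at h
    exact le_of_mul_le_mul_right (hchain.trans h) hdescpos
  constructor
  · intro hδ1
    have hB : (mu*δ)/3 ≤ δ*(mu*δ+1)/(2+δ) := by
      rw [div_le_div_iff₀ (by norm_num) (by linarith)]
      nlinarith [mul_pos hmupos hδ]
    rw [neg_div]
    exact final ((mu*δ)/3) hB
  · intro hδ1
    have hB : (mu*δ^2)/3 ≤ δ*(mu*δ+1)/(2+δ) := by
      rw [div_le_div_iff₀ (by norm_num) (by linarith)]
      nlinarith [mul_pos hmupos hδ, mul_pos (mul_pos hmupos hδ) hδ]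
    rw [neg_div]
    exact final ((mu*δ^2)/3) hB
end

section
/- Suppose that for every class U_j = {x ∈ U : f(x) = j} (j ∈ {0,…,d₁−1}) there exists an index i_j ∈ {1,…,d₂} such that h_{i_j} is injective on S ∩ U_j. Then, letting Q = ⋃_j h_{i_j}⁺(S ∩ U_j) ⊆ {0,…,d₁d₂d₃−1}, we have |Q| = |S|, and the preimage sets H⁺_inv(q) = {x ∈ U : ∃i, hᵢ⁺(x) = q} for q ∈ Q restricted to S are singletons; moreover the sets H⁺_inv(q), q ∈ Q, are pairwise disjoint. -/
open Finset
open scoped Classical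

/-- The combined hash functions `hᵢ⁺(x) = f(x)·d₂d₃ + i·d₃ + hᵢ(x)` (`i` 0-indexed). -/
def hashPlus {U : Type*} (d₂ d₃ : ℕ) {d₁ : ℕ} (f : U → Fin d₁)
    (h : Fin d₂ → U → Fin d₃) (i : Fin d₂) (x : U) : ℕ :=
  (f x : ℕ) * (d₂ * d₃) + (i : ℕ) * d₃ + (h i x : ℕ)

lemma enc_inj (d₂ d₃ a1 a2 b1 b2 c1 c2 : ℕ) (hd₃ : 0 < d₃)
    (hb1 : b1 < d₂) (hb2 : b2 < d₂) (hc1 : c1 < d₃) (hc2 : c2 < d₃)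
    (he : a1 * (d₂ * d₃) + b1 * d₃ + c1 = a2 * (d₂ * d₃) + b2 * d₃ + c2) :
    a1 = a2 ∧ b1 = b2 ∧ c1 = c2 := by
  have e : (a1 * d₂ + b1) * d₃ + c1 = (a2 * d₂ + b2) * d₃ + c2 := by
    rw [add_mul, add_mul, mul_assoc, mul_assoc]; omega
  have hc : c1 = c2 := by
    have := congrArg (· % d₃) e
    simpa [Nat.mul_add_mod', Nat.mod_eq_of_lt hc1, Nat.mod_eq_of_lt hc2] using this
  have e2 : a1 * d₂ + b1 = a2 * d₂ + b2 := by
    have : (a1 * d₂ + b1) * d₃ = (a2 * d₂ + b2) * d₃ := by omega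
    exact Nat.eq_of_mul_eq_mul_right hd₃ this
  have hb : b1 = b2 := by
    have := congrArg (· % d₂) e2
    simpa [Nat.mul_add_mod', Nat.mod_eq_of_lt hb1, Nat.mod_eq_of_lt hb2] using this
  have hd₂ : 0 < d₂ := lt_of_le_of_lt (Nat.zero_le _) hb1
  have ha : a1 = a2 := by
    have : a1 * d₂ = a2 * d₂ := by omega
    exact Nat.eq_of_mul_eq_mul_right hd₂ this
  exact ⟨ha, hb, hc⟩

lemma hashPlus_eq {U : Type*} {d₁ d₂ d₃ : ℕ} (hd₃ : 0 < d₃)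
    {f : U → Fin d₁} {h : Fin d₂ → U → Fin d₃} {i i' : Fin d₂} {x y : U}
    (he : hashPlus d₂ d₃ f h i x = hashPlus d₂ d₃ f h i' y) :
    f x = f y ∧ i = i' ∧ h i x = h i' y := by
  obtain ⟨ha, hb, hc⟩ := enc_inj d₂ d₃ _ _ _ _ _ _ hd₃ i.isLt i'.isLt
    (h i x).isLt (h i' y).isLt he
  exact ⟨Fin.ext ha, Fin.ext hb, Fin.ext hc⟩

/-- if for every class `U_j = f⁻¹(j)` there is an index `i_j` with `h_{i_j}`
injective on `S ∩ U_j`, then `Q = ⋃_j h_{i_j}⁺(S ∩ U_j)` has `|Q| = |S|`, for each `q ∈ Q`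
exactly one element of `S` lies in `H⁺_inv(q)`, and the sets `H⁺_inv(q)`, `q ∈ Q`, are
pairwise disjoint. -/
theorem stmt10 {U : Type*} [Fintype U] [DecidableEq U] (d₁ d₂ d₃ : ℕ) (hd₃ : 0 < d₃)
    (f : U → Fin d₁) (h : Fin d₂ → U → Fin d₃) (S : Finset U)
    (ij : Fin d₁ → Fin d₂)
    (hinj : ∀ j : Fin d₁, Set.InjOn (h (ij j)) {x : U | x ∈ S ∧ f x = j}) :
    (S.image (fun x => hashPlus d₂ d₃ f h (ij (f x)) x)).card = S.card ∧
    (∀ q ∈ S.image (fun x => hashPlus d₂ d₃ f h (ij (f x)) x),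
      ∃! x : U, x ∈ S ∧ x ∈ {y : U | ∃ i, hashPlus d₂ d₃ f h i y = q}) ∧
    ((↑(S.image (fun x => hashPlus d₂ d₃ f h (ij (f x)) x)) : Set ℕ).Pairwise
      (fun q q' => Disjoint {y : U | ∃ i, hashPlus d₂ d₃ f h i y = q}
        {y : U | ∃ i, hashPlus d₂ d₃ f h i y = q'})) := by
  have key : ∀ x ∈ S, ∀ y : U, ∀ i : Fin d₂,
      hashPlus d₂ d₃ f h i y = hashPlus d₂ d₃ f h (ij (f x)) x →
      f y = f x ∧ i = ij (f y) := by
    intro x hx y i he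
    obtain ⟨ha, hb, _⟩ := hashPlus_eq hd₃ he
    exact ⟨ha, by rw [hb, ha]⟩
  have ginj : Set.InjOn (fun x => hashPlus d₂ d₃ f h (ij (f x)) x) S := by
    intro x hx y hy he
    obtain ⟨ha, hb, hc⟩ := hashPlus_eq hd₃ he
    exact hinj (f y) ⟨hx, ha⟩ ⟨hy, rfl⟩ (by rw [← ha] at hc ⊢; exact hc)
  refine ⟨Finset.card_image_of_injOn ginj, ?_, ?_⟩
  · intro q hq
    obtain ⟨x, hx, hqx⟩ := Finset.mem_image.mp hq
    refine ⟨x, ⟨hx, ⟨ij (f x), hqx⟩⟩, ?_⟩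
    rintro y ⟨hy, i, hi⟩
    rw [← hqx] at hi
    obtain ⟨ha, hb, hc⟩ := hashPlus_eq hd₃ hi
    exact hinj (f x) ⟨hy, ha⟩ ⟨hx, rfl⟩ (by rw [hb] at hc; rw [← ha] at hc ⊢; exact hc)
  · intro q hq q' hq' hne
    obtain ⟨x, hx, hqx⟩ := Finset.mem_image.mp (by exact_mod_cast hq)
    obtain ⟨x', hx', hqx'⟩ := Finset.mem_image.mp (by exact_mod_cast hq')
    rw [Set.disjoint_left]
    rintro y ⟨i, hi⟩ ⟨i', hi'⟩
    rw [← hqx] at hi; rw [← hqx'] at hi'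
    obtain ⟨ha, hb⟩ := key x hx y i hi
    obtain ⟨ha', hb'⟩ := key x' hx' y i' hi'
    apply hne
    rw [← hqx, ← hqx', ← hi, ← hi', hb, hb']
end

section
/- For each j ∈ [m], let X_j be uniformly distributed on {(j−1)m+1, …, jm}, with X₁,…,X_m mutually independent, and let M be any random variable (a message) determined by (X₁,…,X_m) and independent randomness. Suppose for each j there is a random variable X_j' that is a function of (M, X_{j+1},…,X_m) and independent randomness, with Pr[X_j' = X_j] ≥ 1 − δ. Then H(M) ≥ Σ_{j=1}^m I(X_j; M | X_{j+1},…,X_m) ≥ m((1−δ) log m − 1), and hence log|𝓜| ≥ m((1−δ)·log m − 1) where 𝓜 is the range of M. -/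
open Finset
open scoped Classical

/-- Probability of an event under a finite probability mass function `p`. -/
noncomputable def pr {Ω : Type*} [Fintype Ω] (p : Ω → ℝ) (s : Set Ω) : ℝ :=
  ∑ ω ∈ Finset.univ.filter (fun ω => ω ∈ s), p ω

/-- Shannon entropy (base 2) of a random variable `X` on a finite probability space. -/
noncomputable def ent {Ω α : Type*} [Fintype Ω] (p : Ω → ℝ) (X : Ω → α) : ℝ :=
  ∑ a ∈ Finset.univ.image X,
    -(pr p {ω | X ω = a}) * Real.logb 2 (pr p {ω | X ω = a})

/-- Conditional entropy `H(X | Y) = H(X, Y) − H(Y)`. -/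
noncomputable def condEnt {Ω α β : Type*} [Fintype Ω] (p : Ω → ℝ)
    (X : Ω → α) (Y : Ω → β) : ℝ :=
  ent p (fun ω => (X ω, Y ω)) - ent p Y

/-- Conditional mutual information `I(X; M | Z) = H(X | Z) − H(X | M, Z)`. -/
noncomputable def condMutInfo {Ω α γ β : Type*} [Fintype Ω] (p : Ω → ℝ)
    (X : Ω → α) (M : Ω → γ) (Z : Ω → β) : ℝ :=
  condEnt p X Z - condEnt p X (fun ω => (M ω, Z ω))

noncomputable def img {Ω β : Type*} [Fintype Ω] (f : Ω → β) : Finset β :=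
  @Finset.image _ _ (fun a b => Classical.propDecidable (a = b)) f Finset.univ

lemma image_eq_img {Ω β : Type*} [Fintype Ω] (inst : DecidableEq β) (f : Ω → β) :
    @Finset.image _ _ inst f Finset.univ = img f := by
  ext b
  simp [img, Finset.mem_image]

lemma mem_img {Ω β : Type*} [Fintype Ω] (f : Ω → β) (ω : Ω) : f ω ∈ img f := by
  simp only [img, Finset.mem_image]
  exact ⟨ω, Finset.mem_univ ω, rfl⟩

lemma exists_of_mem_img {Ω β : Type*} [Fintype Ω] {f : Ω → β} {b : β}
    (h : b ∈ img f) : ∃ ω, f ω = b := by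
  simp only [img, Finset.mem_image] at h
  obtain ⟨ω, -, hω⟩ := h
  exact ⟨ω, hω⟩

lemma ent_eq {Ω α : Type*} [Fintype Ω] (p : Ω → ℝ) (X : Ω → α) :
    ent p X = ∑ a ∈ img X,
      -(pr p {ω | X ω = a}) * Real.logb 2 (pr p {ω | X ω = a}) := by
  unfold ent
  rw [image_eq_img]

section Basic
variable {Ω : Type*} [Fintype Ω] (p : Ω → ℝ)

lemma pr_nonneg (hp0 : ∀ ω, 0 ≤ p ω) (s : Set Ω) : 0 ≤ pr p s :=
  Finset.sum_nonneg fun ω _ => hp0 ω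

lemma pr_mono (hp0 : ∀ ω, 0 ≤ p ω) {s t : Set Ω} (h : s ⊆ t) : pr p s ≤ pr p t := by
  apply Finset.sum_le_sum_of_subset_of_nonneg
  · intro ω hω; simp only [mem_filter, mem_univ, true_and] at *; exact h hω
  · intro ω _ _; exact hp0 ω

lemma pr_univ (hp1 : ∑ ω, p ω = 1) : pr p (Set.univ) = 1 := by
  simpa [pr] using hp1

lemma pr_empty : pr p (∅ : Set Ω) = 0 := by simp [pr]

lemma pr_le_one (hp0 : ∀ ω, 0 ≤ p ω) (hp1 : ∑ ω, p ω = 1) (s : Set Ω) : pr p s ≤ 1 := by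
  rw [← pr_univ p hp1]; exact pr_mono p hp0 (Set.subset_univ s)

lemma pr_compl (hp1 : ∑ ω, p ω = 1) (P : Ω → Prop) :
    pr p {ω | ¬ P ω} = 1 - pr p {ω | P ω} := by
  have := Finset.sum_filter_add_sum_filter_not (Finset.univ : Finset Ω)
    (fun ω => P ω) p
  rw [hp1] at this
  simp only [pr, Set.mem_setOf_eq]
  rw [eq_sub_iff_add_eq, add_comm]
  convert this using 3 <;> · ext ω; simp

lemma pr_partition {α : Type*} (A : Ω → α) (s : Set Ω) :
    pr p s = ∑ a ∈ img A, pr p {ω | ω ∈ s ∧ A ω = a} := by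
  unfold pr
  rw [← Finset.sum_fiberwise_of_maps_to (g := A) (t := img A)
    (fun x _ => mem_img A x)]
  refine Finset.sum_congr rfl fun a _ => ?_
  refine Finset.sum_congr ?_ (fun _ _ => rfl)
  ext ω
  simp [and_comm]
end Basic
section Core
variable {α : Type*}

lemma core_sum_logb (s : Finset α) (q : α → ℝ) (hq : ∀ a ∈ s, 0 ≤ q a) :
    ∑ a ∈ s, -(q a) * Real.logb 2 (q a) ≤
      (∑ a ∈ s, q a) * Real.logb 2 s.card - (∑ a ∈ s, q a) * Real.logb 2 (∑ a ∈ s, q a) := by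
  rcases s.eq_empty_or_nonempty with rfl | hs
  · simp
  set Q := ∑ a ∈ s, q a with hQ
  have hQ0 : 0 ≤ Q := Finset.sum_nonneg hq
  have hn : 0 < (s.card : ℝ) := by exact_mod_cast Finset.card_pos.mpr hs
  have hL : 0 < Real.log 2 := Real.log_pos one_lt_two
  have key : ∀ a ∈ s, -(q a) * Real.logb 2 (q a) + q a * Real.logb 2 Q
      ≤ q a * Real.logb 2 s.card + (Q / s.card - q a) / Real.log 2 := by
    intro a ha
    rcases eq_or_lt_of_le (hq a ha) with h0 | h0
    · rw [← h0]
      simp only [neg_zero, zero_mul, neg_mul, zero_add, add_zero, sub_zero]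
      positivity
    · have hQpos : 0 < Q := lt_of_lt_of_le h0 (Finset.single_le_sum hq ha)
      have hlog : Real.log (Q / (q a * s.card)) ≤ Q / (q a * s.card) - 1 :=
        Real.log_le_sub_one_of_pos (by positivity)
      have hexpand : Real.log (Q / (q a * s.card))
          = Real.log Q - Real.log (q a) - Real.log s.card := by
        rw [Real.log_div (ne_of_gt hQpos) (by positivity), Real.log_mul (ne_of_gt h0) (ne_of_gt hn)]
        ring
      have h2 : q a * ((Real.log Q - Real.log (q a) - Real.log s.card) / Real.log 2)
          ≤ (Q / s.card - q a) / Real.log 2 := by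
        rw [← hexpand]
        have := mul_le_mul_of_nonneg_left hlog (le_of_lt h0)
        have heq : q a * (Q / (q a * s.card) - 1) = Q / s.card - q a := by
          field_simp
        calc q a * (Real.log (Q / (q a * s.card)) / Real.log 2)
            = (q a * Real.log (Q / (q a * s.card))) / Real.log 2 := by ring
          _ ≤ (q a * (Q / (q a * s.card) - 1)) / Real.log 2 := by
              exact div_le_div_of_nonneg_right this hL.le
          _ = (Q / s.card - q a) / Real.log 2 := by rw [heq]
      simp only [Real.logb] at *
      ring_nf at h2 ⊢
      linarith
  have hsum := Finset.sum_le_sum key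
  rw [Finset.sum_add_distrib, Finset.sum_add_distrib, ← Finset.sum_mul, ← Finset.sum_mul] at hsum
  have hconst : ∑ a ∈ s, (Q / s.card - q a) / Real.log 2 = 0 := by
    rw [← Finset.sum_div, Finset.sum_sub_distrib, Finset.sum_const]
    field_simp
    have hc : (s.card : ℝ) * (Q / s.card) = Q := by field_simp [hn.ne']
    rw [nsmul_eq_mul, hc, ← hQ]; ring
  rw [hconst, add_zero] at hsum
  linarith
end Core

section Ent
variable {Ω : Type*} [Fintype Ω] (p : Ω → ℝ)

lemma pr_fiber_zero {α : Type*} (X : Ω → α) {a : α} (h : a ∉ img X) :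
    pr p {ω | X ω = a} = 0 := by
  unfold pr
  apply Finset.sum_eq_zero
  intro ω hω
  simp only [mem_filter, mem_univ, true_and, Set.mem_setOf_eq] at hω
  exact absurd (hω ▸ mem_img X ω) h

lemma ent_eq_sum_subset {α : Type*} (X : Ω → α) {s : Finset α}
    (h : img X ⊆ s) :
    ent p X = ∑ a ∈ s, -(pr p {ω | X ω = a}) * Real.logb 2 (pr p {ω | X ω = a}) := by
  rw [ent_eq]
  apply Finset.sum_subset h
  intro a _ ha
  rw [pr_fiber_zero p X ha]
  simp

lemma sum_pr_img {α : Type*} (hp1 : ∑ ω, p ω = 1) (X : Ω → α) :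
    ∑ a ∈ img X, pr p {ω | X ω = a} = 1 := by
  rw [← pr_univ p hp1, pr_partition p X Set.univ]
  simp

lemma ent_nonneg (hp0 : ∀ ω, 0 ≤ p ω) (hp1 : ∑ ω, p ω = 1) {α : Type*} (X : Ω → α) :
    0 ≤ ent p X := by
  rw [ent_eq]
  apply Finset.sum_nonneg
  intro a _
  have h0 := pr_nonneg p hp0 {ω | X ω = a}
  have h1 := pr_le_one p hp0 hp1 {ω | X ω = a}
  have : Real.logb 2 (pr p {ω | X ω = a}) ≤ 0 := Real.logb_nonpos one_lt_two h0 h1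
  nlinarith

lemma ent_le_logb_card (hp0 : ∀ ω, 0 ≤ p ω) (hp1 : ∑ ω, p ω = 1) {α : Type*} (X : Ω → α) :
    ent p X ≤ Real.logb 2 (img X).card := by
  have := core_sum_logb (img X) (fun a => pr p {ω | X ω = a})
    (fun a _ => pr_nonneg p hp0 _)
  rw [sum_pr_img p hp1 X] at this
  rw [ent_eq]
  simpa using this

lemma ent_pair_left {α β : Type*} (X : Ω → α) (Y : Ω → β)
    (hdet : ∀ ω ω', X ω = X ω' → Y ω = Y ω') :
    ent p (fun ω => (X ω, Y ω)) = ent p X := by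
  rw [ent_eq, ent_eq]
  apply Finset.sum_bij (i := fun ab _ => ab.1)
  · intro ab hab
    obtain ⟨ω, hω⟩ := exists_of_mem_img hab
    rw [← hω]
    exact mem_img X ω
  · intro ab hab ab' hab' h1
    obtain ⟨ω, hω⟩ := exists_of_mem_img hab
    obtain ⟨ω', hω'⟩ := exists_of_mem_img hab'
    rw [← hω, ← hω'] at h1 ⊢
    simp only at h1
    have := hdet ω ω' h1
    simp [h1, this]
  · intro a ha
    obtain ⟨ω, hω⟩ := exists_of_mem_img ha
    exact ⟨(X ω, Y ω), mem_img _ ω, hω⟩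
  · intro ab hab
    obtain ⟨ω, hω⟩ := exists_of_mem_img hab
    have hset : {ω' | (X ω', Y ω') = ab} = {ω' | X ω' = ab.1} := by
      ext ω'
      simp only [Set.mem_setOf_eq]
      constructor
      · intro hh; rw [← hh]
      · intro hh
        have hx : X ω' = X ω := by rw [hh, ← hω]
        have hy := hdet ω' ω hx
        rw [← hω, Prod.mk.injEq]
        exact ⟨hx, hy⟩
    rw [hset]

lemma ent_pair_right {α β : Type*} (X : Ω → α) (Y : Ω → β)
    (hdet : ∀ ω ω', Y ω = Y ω' → X ω = X ω') :
    ent p (fun ω => (X ω, Y ω)) = ent p Y := by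
  rw [ent_eq, ent_eq]
  apply Finset.sum_bij (i := fun ab _ => ab.2)
  · intro ab hab
    obtain ⟨ω, hω⟩ := exists_of_mem_img hab
    rw [← hω]
    exact mem_img Y ω
  · intro ab hab ab' hab' h1
    obtain ⟨ω, hω⟩ := exists_of_mem_img hab
    obtain ⟨ω', hω'⟩ := exists_of_mem_img hab'
    rw [← hω, ← hω'] at h1 ⊢
    simp only at h1
    have := hdet ω ω' h1
    simp [h1, this]
  · intro a ha
    obtain ⟨ω, hω⟩ := exists_of_mem_img ha
    exact ⟨(X ω, Y ω), mem_img _ ω, hω⟩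
  · intro ab hab
    obtain ⟨ω, hω⟩ := exists_of_mem_img hab
    have hset : {ω' | (X ω', Y ω') = ab} = {ω' | Y ω' = ab.2} := by
      ext ω'
      simp only [Set.mem_setOf_eq]
      constructor
      · intro hh; rw [← hh]
      · intro hh
        have hy : Y ω' = Y ω := by rw [hh, ← hω]
        have hx := hdet ω' ω hy
        rw [← hω, Prod.mk.injEq]
        exact ⟨hx, hy⟩
    rw [hset]

lemma ent_congr {α β : Type*} (X : Ω → α) (Y : Ω → β)
    (h : ∀ ω ω', X ω = X ω' ↔ Y ω = Y ω') : ent p X = ent p Y :=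
  (ent_pair_left p X Y (fun ω ω' hh => (h ω ω').mp hh)).symm.trans
    (ent_pair_right p X Y (fun ω ω' hh => (h ω ω').mpr hh))

lemma ent_const (hp1 : ∑ ω, p ω = 1) {α : Type*} (X : Ω → α)
    (h : ∀ ω ω', X ω = X ω') : ent p X = 0 := by
  rcases isEmpty_or_nonempty Ω with hΩ | ⟨⟨ω₀⟩⟩
  · simp [ent_eq, img, Finset.univ_eq_empty]
  · have himg : img X = {X ω₀} := by
      apply Finset.eq_singleton_iff_unique_mem.mpr
      exact ⟨mem_img X ω₀, by
        intro a ha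
        obtain ⟨ω, hω⟩ := exists_of_mem_img ha
        rw [← hω]; exact h ω ω₀⟩
    have hpr : pr p {ω | X ω = X ω₀} = 1 := by
      rw [← pr_univ p hp1]
      congr 1
      ext ω; simp [h ω ω₀]
    rw [ent_eq, himg]
    simp [hpr]

end Ent

section Ent2
variable {Ω : Type*} [Fintype Ω] (p : Ω → ℝ)

lemma marginal_snd {α β : Type*} (A : Ω → α) (B : Ω → β) (b : β) :
    pr p {ω | B ω = b} =
      ∑ x ∈ (img (fun ω => (A ω, B ω))).filter (fun x => x.2 = b),
        pr p {ω | (A ω, B ω) = x} := by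
  rw [pr_partition p (fun ω => (A ω, B ω)) {ω | B ω = b}, Finset.sum_filter]
  refine Finset.sum_congr rfl fun x _ => ?_
  by_cases hx : x.2 = b
  · simp only [hx, if_true]
    congr 1
    ext ω
    simp only [Set.mem_setOf_eq]
    constructor
    · exact fun h => h.2
    · intro h
      refine ⟨?_, h⟩
      have h2 : B ω = x.2 := by rw [← h]
      rw [h2, hx]
  · simp only [hx, if_false]
    convert pr_empty p
    ext ω
    simp only [Set.mem_setOf_eq, Set.mem_empty_iff_false, iff_false, not_and]
    intro h1 h2
    apply hx
    rw [← h2]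
    exact h1

lemma marginal_fst {α β : Type*} (A : Ω → α) (B : Ω → β) (a : α) :
    pr p {ω | A ω = a} =
      ∑ x ∈ (img (fun ω => (A ω, B ω))).filter (fun x => x.1 = a),
        pr p {ω | (A ω, B ω) = x} := by
  rw [pr_partition p (fun ω => (A ω, B ω)) {ω | A ω = a}, Finset.sum_filter]
  refine Finset.sum_congr rfl fun x _ => ?_
  by_cases hx : x.1 = a
  · simp only [hx, if_true]
    congr 1
    ext ω
    simp only [Set.mem_setOf_eq]
    constructor
    · exact fun h => h.2
    · intro h
      refine ⟨?_, h⟩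
      have h2 : A ω = x.1 := by rw [← h]
      rw [h2, hx]
  · simp only [hx, if_false]
    convert pr_empty p
    ext ω
    simp only [Set.mem_setOf_eq, Set.mem_empty_iff_false, iff_false, not_and]
    intro h1 h2
    apply hx
    rw [← h2]
    exact h1

lemma ent_snd_eq {α β : Type*} (A : Ω → α) (B : Ω → β) :
    ent p B = ∑ x ∈ img (fun ω => (A ω, B ω)),
      -(pr p {ω | (A ω, B ω) = x}) * Real.logb 2 (pr p {ω | B ω = x.2}) := by
  rw [← Finset.sum_fiberwise_of_maps_to (g := fun x : α × β => x.2)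
    (t := img B) (fun x hx => by
      obtain ⟨ω, hω⟩ := exists_of_mem_img hx
      rw [← hω]
      exact mem_img B ω)]
  rw [ent_eq]
  refine Finset.sum_congr rfl fun b _ => ?_
  have h1 : ∑ x ∈ (img (fun ω => (A ω, B ω))).filter (fun x => x.2 = b),
      -(pr p {ω | (A ω, B ω) = x}) * Real.logb 2 (pr p {ω | B ω = x.2})
      = ∑ x ∈ (img (fun ω => (A ω, B ω))).filter (fun x => x.2 = b),
      -(pr p {ω | (A ω, B ω) = x}) * Real.logb 2 (pr p {ω | B ω = b}) := by
    refine Finset.sum_congr rfl fun x hx => ?_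
    have hx2 : x.2 = b := (Finset.mem_filter.mp hx).2
    rw [hx2]
  rw [h1, ← Finset.sum_mul, Finset.sum_neg_distrib, ← marginal_snd p A B b]

lemma ent_fst_eq {α β : Type*} (A : Ω → α) (B : Ω → β) :
    ent p A = ∑ x ∈ img (fun ω => (A ω, B ω)),
      -(pr p {ω | (A ω, B ω) = x}) * Real.logb 2 (pr p {ω | A ω = x.1}) := by
  rw [← Finset.sum_fiberwise_of_maps_to (g := fun x : α × β => x.1)
    (t := img A) (fun x hx => by
      obtain ⟨ω, hω⟩ := exists_of_mem_img hx
      rw [← hω]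
      exact mem_img A ω)]
  rw [ent_eq]
  refine Finset.sum_congr rfl fun a _ => ?_
  have h1 : ∑ x ∈ (img (fun ω => (A ω, B ω))).filter (fun x => x.1 = a),
      -(pr p {ω | (A ω, B ω) = x}) * Real.logb 2 (pr p {ω | A ω = x.1})
      = ∑ x ∈ (img (fun ω => (A ω, B ω))).filter (fun x => x.1 = a),
      -(pr p {ω | (A ω, B ω) = x}) * Real.logb 2 (pr p {ω | A ω = a}) := by
    refine Finset.sum_congr rfl fun x hx => ?_
    have hx2 : x.1 = a := (Finset.mem_filter.mp hx).2
    rw [hx2]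
  rw [h1, ← Finset.sum_mul, Finset.sum_neg_distrib, ← marginal_fst p A B a]

lemma ent_pair_eq_fiberwise {α β : Type*} (A : Ω → α) (B : Ω → β) :
    ent p (fun ω => (A ω, B ω)) = ∑ b ∈ img B,
      ∑ x ∈ (img (fun ω => (A ω, B ω))).filter (fun x => x.2 = b),
        -(pr p {ω | (A ω, B ω) = x}) * Real.logb 2 (pr p {ω | (A ω, B ω) = x}) := by
  rw [ent_eq, ← Finset.sum_fiberwise_of_maps_to (g := fun x : α × β => x.2)
    (t := img B) (fun x hx => by
      obtain ⟨ω, hω⟩ := exists_of_mem_img hx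
      rw [← hω]
      exact mem_img B ω)]

lemma ent_snd_le (hp0 : ∀ ω, 0 ≤ p ω) {α β : Type*} (A : Ω → α) (B : Ω → β) :
    ent p B ≤ ent p (fun ω => (A ω, B ω)) := by
  rw [ent_snd_eq p A B, ent_eq]
  apply Finset.sum_le_sum
  intro x _
  have hq0 : 0 ≤ pr p {ω | (A ω, B ω) = x} := pr_nonneg p hp0 _
  rcases eq_or_lt_of_le hq0 with h0 | h0
  · rw [← h0]; simp
  · have hle : pr p {ω | (A ω, B ω) = x} ≤ pr p {ω | B ω = x.2} := by
      apply pr_mono p hp0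
      intro ω hω
      simp only [Set.mem_setOf_eq] at *
      rw [← hω]
    have hlog : Real.logb 2 (pr p {ω | (A ω, B ω) = x}) ≤ Real.logb 2 (pr p {ω | B ω = x.2}) :=
      Real.logb_le_logb_of_le one_lt_two h0 hle
    exact mul_le_mul_of_nonpos_left hlog (by linarith)

end Ent2

section Ent3
variable {Ω : Type*} [Fintype Ω] (p : Ω → ℝ)

lemma condEnt_le_sum (hp0 : ∀ ω, 0 ≤ p ω) {α β : Type*} (A : Ω → α) (B : Ω → β) :
    condEnt p A B ≤ ∑ b ∈ img B, pr p {ω | B ω = b} *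
      Real.logb 2 (((img (fun ω => (A ω, B ω))).filter (fun x => x.2 = b)).card) := by
  unfold condEnt
  rw [ent_pair_eq_fiberwise p A B, ent_eq p B, ← Finset.sum_sub_distrib]
  apply Finset.sum_le_sum
  intro b _
  have hcore := core_sum_logb ((img (fun ω => (A ω, B ω))).filter (fun x => x.2 = b))
    (fun x => pr p {ω | (A ω, B ω) = x}) (fun x _ => pr_nonneg p hp0 _)
  rw [← marginal_snd p A B b] at hcore
  linarith

lemma ent_pair_le (hp0 : ∀ ω, 0 ≤ p ω) (hp1 : ∑ ω, p ω = 1) {α β : Type*}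
    (A : Ω → α) (B : Ω → β) :
    ent p (fun ω => (A ω, B ω)) ≤ ent p A + ent p B := by
  have hL : 0 < Real.log 2 := Real.log_pos one_lt_two
  have key : ∀ x ∈ img (fun ω => (A ω, B ω)),
      -(pr p {ω | (A ω, B ω) = x}) * Real.logb 2 (pr p {ω | (A ω, B ω) = x})
      - (-(pr p {ω | (A ω, B ω) = x}) * Real.logb 2 (pr p {ω | A ω = x.1})
        + -(pr p {ω | (A ω, B ω) = x}) * Real.logb 2 (pr p {ω | B ω = x.2}))
      ≤ (pr p {ω | A ω = x.1} * pr p {ω | B ω = x.2} - pr p {ω | (A ω, B ω) = x}) / Real.log 2 := by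
    intro x _
    set q := pr p {ω | (A ω, B ω) = x} with hqdef
    have hq0 : 0 ≤ q := pr_nonneg p hp0 _
    have h1 : 0 ≤ pr p {ω | A ω = x.1} := pr_nonneg p hp0 _
    have h2 : 0 ≤ pr p {ω | B ω = x.2} := pr_nonneg p hp0 _
    rcases eq_or_lt_of_le hq0 with h0 | h0
    · rw [← h0]
      simp only [neg_zero, zero_mul, neg_mul, sub_zero, add_zero, zero_add, sub_self]
      positivity
    · have hle1 : q ≤ pr p {ω | A ω = x.1} := by
        apply pr_mono p hp0
        intro ω hω
        simp only [Set.mem_setOf_eq] at *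
        rw [← hω]
      have hle2 : q ≤ pr p {ω | B ω = x.2} := by
        apply pr_mono p hp0
        intro ω hω
        simp only [Set.mem_setOf_eq] at *
        rw [← hω]
      have hp1pos : 0 < pr p {ω | A ω = x.1} := lt_of_lt_of_le h0 hle1
      have hp2pos : 0 < pr p {ω | B ω = x.2} := lt_of_lt_of_le h0 hle2
      have hlog : Real.log (pr p {ω | A ω = x.1} * pr p {ω | B ω = x.2} / q)
          ≤ pr p {ω | A ω = x.1} * pr p {ω | B ω = x.2} / q - 1 :=
        Real.log_le_sub_one_of_pos (by positivity)
      have hexp : Real.log (pr p {ω | A ω = x.1} * pr p {ω | B ω = x.2} / q)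
          = Real.log (pr p {ω | A ω = x.1}) + Real.log (pr p {ω | B ω = x.2}) - Real.log q := by
        rw [Real.log_div (by positivity) (ne_of_gt h0),
          Real.log_mul (ne_of_gt hp1pos) (ne_of_gt hp2pos)]
      rw [hexp] at hlog
      have hfin : q * (Real.log (pr p {ω | A ω = x.1}) + Real.log (pr p {ω | B ω = x.2})
          - Real.log q) ≤ pr p {ω | A ω = x.1} * pr p {ω | B ω = x.2} - q := by
        have heq : q * (pr p {ω | A ω = x.1} * pr p {ω | B ω = x.2} / q - 1)
            = pr p {ω | A ω = x.1} * pr p {ω | B ω = x.2} - q := by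
          field_simp
        have hmul := mul_le_mul_of_nonneg_left hlog (le_of_lt h0)
        linarith
      simp only [Real.logb]
      have goal_eq : -q * (Real.log q / Real.log 2)
          - (-q * (Real.log (pr p {ω | A ω = x.1}) / Real.log 2)
            + -q * (Real.log (pr p {ω | B ω = x.2}) / Real.log 2))
          = (q * (Real.log (pr p {ω | A ω = x.1}) + Real.log (pr p {ω | B ω = x.2})
            - Real.log q)) / Real.log 2 := by
        ring
      rw [goal_eq]
      exact div_le_div_of_nonneg_right hfin hL.le
  have hsum := Finset.sum_le_sum key
  rw [ent_fst_eq p A B, ent_snd_eq p A B, ent_eq p (fun ω => (A ω, B ω))]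
  have hbound : ∑ x ∈ img (fun ω => (A ω, B ω)),
      (pr p {ω | A ω = x.1} * pr p {ω | B ω = x.2} - pr p {ω | (A ω, B ω) = x}) / Real.log 2 ≤ 0 := by
    rw [← Finset.sum_div, Finset.sum_sub_distrib]
    rw [sum_pr_img p hp1 (fun ω => (A ω, B ω))]
    apply div_nonpos_of_nonpos_of_nonneg _ (le_of_lt hL)
    rw [sub_nonpos]
    have hsub : img (fun ω => (A ω, B ω)) ⊆ (img A) ×ˢ (img B) := by
      intro x hx
      obtain ⟨ω, hω⟩ := exists_of_mem_img hx
      rw [← hω]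
      exact Finset.mem_product.mpr ⟨mem_img A ω, mem_img B ω⟩
    calc ∑ x ∈ img (fun ω => (A ω, B ω)), pr p {ω | A ω = x.1} * pr p {ω | B ω = x.2}
        ≤ ∑ x ∈ (img A) ×ˢ (img B), pr p {ω | A ω = x.1} * pr p {ω | B ω = x.2} := by
          apply Finset.sum_le_sum_of_subset_of_nonneg hsub
          intro x _ _
          exact mul_nonneg (pr_nonneg p hp0 _) (pr_nonneg p hp0 _)
      _ = (∑ a ∈ img A, pr p {ω | A ω = a}) * (∑ b ∈ img B, pr p {ω | B ω = b}) := by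
          rw [Finset.sum_mul_sum]
          rw [Finset.sum_product]
      _ = 1 := by rw [sum_pr_img p hp1 A, sum_pr_img p hp1 B, mul_one]
  have := Finset.sum_sub_distrib (s := img (fun ω => (A ω, B ω)))
    (f := fun x => -(pr p {ω | (A ω, B ω) = x}) * Real.logb 2 (pr p {ω | (A ω, B ω) = x}))
    (g := fun x => (-(pr p {ω | (A ω, B ω) = x}) * Real.logb 2 (pr p {ω | A ω = x.1})
        + -(pr p {ω | (A ω, B ω) = x}) * Real.logb 2 (pr p {ω | B ω = x.2})))
  rw [this] at hsum
  rw [Finset.sum_add_distrib] at hsum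
  linarith

lemma ent_pair_of_indep (hp0 : ∀ ω, 0 ≤ p ω) (hp1 : ∑ ω, p ω = 1) {α β : Type*}
    (A : Ω → α) (B : Ω → β)
    (h : ∀ a b, pr p {ω | (A ω, B ω) = (a, b)} = pr p {ω | A ω = a} * pr p {ω | B ω = b}) :
    ent p (fun ω => (A ω, B ω)) = ent p A + ent p B := by
  have hsub : img (fun ω => (A ω, B ω)) ⊆ (img A) ×ˢ (img B) := by
    intro x hx
    obtain ⟨ω, hω⟩ := exists_of_mem_img hx
    rw [← hω]
    exact Finset.mem_product.mpr ⟨mem_img A ω, mem_img B ω⟩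
  rw [ent_eq_sum_subset p _ hsub, Finset.sum_product]
  have step : ∀ a ∈ img A, ∀ b ∈ img B,
      -(pr p {ω | (A ω, B ω) = (a, b)}) * Real.logb 2 (pr p {ω | (A ω, B ω) = (a, b)})
      = (-(pr p {ω | A ω = a}) * Real.logb 2 (pr p {ω | A ω = a})) * pr p {ω | B ω = b}
        + pr p {ω | A ω = a} * (-(pr p {ω | B ω = b}) * Real.logb 2 (pr p {ω | B ω = b})) := by
    intro a _ b _
    rw [h a b]
    rcases eq_or_lt_of_le (pr_nonneg p hp0 {ω | A ω = a}) with h1 | h1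
    · rw [← h1]; simp
    rcases eq_or_lt_of_le (pr_nonneg p hp0 {ω | B ω = b}) with h2 | h2
    · rw [← h2]; simp
    simp only [Real.logb]
    rw [Real.log_mul (ne_of_gt h1) (ne_of_gt h2)]
    ring
  rw [Finset.sum_congr rfl (fun a ha => Finset.sum_congr rfl (fun b hb => step a ha b hb))]
  have exp : ∀ a, (∑ b ∈ img B,
      ((-(pr p {ω | A ω = a}) * Real.logb 2 (pr p {ω | A ω = a})) * pr p {ω | B ω = b}
        + pr p {ω | A ω = a} * (-(pr p {ω | B ω = b}) * Real.logb 2 (pr p {ω | B ω = b}))))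
      = (-(pr p {ω | A ω = a}) * Real.logb 2 (pr p {ω | A ω = a}))
        + pr p {ω | A ω = a} * ent p B := by
    intro a
    rw [Finset.sum_add_distrib, ← Finset.mul_sum, ← Finset.mul_sum, sum_pr_img p hp1 B,
      ← ent_eq p B, mul_one]
  rw [Finset.sum_congr rfl (fun a _ => exp a), Finset.sum_add_distrib, ← Finset.sum_mul,
    sum_pr_img p hp1 A, one_mul, ← ent_eq p A]

end Ent3

section Helpers
variable {Ω : Type*} [Fintype Ω] (p : Ω → ℝ)

lemma pr_event_partition {β : Type*} (B : Ω → β) (C : β → Prop) :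
    pr p {ω | C (B ω)} = ∑ b ∈ (img B).filter C, pr p {ω | B ω = b} := by
  rw [pr_partition p B {ω | C (B ω)}, Finset.sum_filter]
  refine Finset.sum_congr rfl fun b _ => ?_
  by_cases hC : C b
  · rw [if_pos hC]
    congr 1
    ext ω
    simp only [Set.mem_setOf_eq]
    constructor
    · exact fun h => h.2
    · intro h
      exact ⟨by rw [h]; exact hC, h⟩
  · rw [if_neg hC]
    convert pr_empty p
    ext ω
    simp only [Set.mem_setOf_eq, Set.mem_empty_iff_false, iff_false, not_and]
    intro h1 h2
    exact hC (h2 ▸ h1)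

lemma mem_filter' {α : Type*} {C : α → Prop} {inst : DecidablePred C} {s : Finset α} {a : α} :
    a ∈ @Finset.filter α C inst s ↔ a ∈ s ∧ C a := Finset.mem_filter

lemma pr_pred' {β : Type*} (A : Ω → β) {s : Finset β} (hs : img A ⊆ s) (C : β → Prop) :
    pr p {ω | C (A ω)} = ∑ b ∈ s.filter C, pr p {ω | A ω = b} := by
  rw [pr_event_partition p A C]
  apply Finset.sum_subset (Finset.filter_subset_filter C hs)
  intro b hbs hb
  exact pr_fiber_zero p A (fun hmem =>
    hb (Finset.mem_filter.mpr ⟨hmem, (Finset.mem_filter.mp hbs).2⟩))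

end Helpers

/-- The binary entropy function. -/
noncomputable def binEnt (q : ℝ) : ℝ :=
  -q * Real.logb 2 q - (1 - q) * Real.logb 2 (1 - q)

/-- with `X_j` uniform on `{(j−1)m+1,…,jm}` (here `j` 0-indexed, so uniform
on `{jm+1,…,(j+1)m}`), mutually independent, a message `M`, and guesses `X'_j` that are
functions of `(M, X_{j+1},…,X_m)` with `Pr[X'_j = X_j] ≥ 1 − δ`, we get
`H(M) ≥ Σ_j I(X_j; M | X_{j+1},…,X_m) ≥ m((1−δ)log₂ m − 1)`, hence
`log₂|𝓜| ≥ m((1−δ)log₂ m − 1)`. -/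
theorem stmt16 {Ω 𝓜 : Type*} [Fintype Ω] [Fintype 𝓜]
    (p : Ω → ℝ) (hp0 : ∀ ω, 0 ≤ p ω) (hp1 : ∑ ω, p ω = 1)
    (m : ℕ) (δ : ℝ) (hδ0 : 0 ≤ δ) (hδ1 : δ < 1)
    (X : Fin m → Ω → ℕ)
    (hrange : ∀ (j : Fin m) (ω : Ω), X j ω ∈ Set.Ioc ((j : ℕ) * m) (((j : ℕ) + 1) * m))
    (huniform : ∀ (j : Fin m) (a : ℕ), a ∈ Set.Ioc ((j : ℕ) * m) (((j : ℕ) + 1) * m) →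
      pr p {ω | X j ω = a} = 1 / m)
    (hindep : ∀ v : Fin m → ℕ,
      pr p {ω | ∀ j, X j ω = v j} = ∏ j, pr p {ω | X j ω = v j})
    (M : Ω → 𝓜)
    (X' : Fin m → Ω → ℕ)
    (hfunc : ∀ (j : Fin m) (ω ω' : Ω), M ω = M ω' →
      (∀ t : Fin m, (j : ℕ) < (t : ℕ) → X t ω = X t ω') → X' j ω = X' j ω')
    (hguess : ∀ j : Fin m, 1 - δ ≤ pr p {ω | X' j ω = X j ω}) :
    (∑ j : Fin m, condMutInfo p (X j) M
        (fun ω => fun t : Fin m => if (j : ℕ) < (t : ℕ) then X t ω else 0) ≤ ent p M) ∧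
    ((m : ℝ) * ((1 - δ) * Real.logb 2 m - 1) ≤
      ∑ j : Fin m, condMutInfo p (X j) M
        (fun ω => fun t : Fin m => if (j : ℕ) < (t : ℕ) then X t ω else 0)) ∧
    ((m : ℝ) * ((1 - δ) * Real.logb 2 m - 1) ≤ Real.logb 2 (Fintype.card 𝓜)) := by
  have hne : Nonempty Ω := by
    by_contra h
    rw [not_nonempty_iff] at h
    rw [Finset.univ_eq_empty, Finset.sum_empty] at hp1
    norm_num at hp1
  -- the cumulative suffix variables
  set W : ℕ → Ω → (Fin m → ℕ) := fun k ω t => if k ≤ (t : ℕ) then X t ω else 0 with hW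
  set f : ℕ → ℝ := fun k => ent p (fun ω => (M ω, W k ω)) - ent p (W k) with hf
  have hZW : ∀ j : Fin m,
      (fun ω => fun t : Fin m => if (j : ℕ) < (t : ℕ) then X t ω else 0) = W ((j : ℕ) + 1) := by
    intro j
    funext ω t
    simp only [hW]
    exact if_congr Nat.lt_iff_add_one_le rfl rfl
  have hWcore : ∀ j : Fin m, ∀ ω ω',
      (X j ω = X j ω' ∧ W ((j : ℕ) + 1) ω = W ((j : ℕ) + 1) ω') ↔ W (j : ℕ) ω = W (j : ℕ) ω' := by
    intro j ω ω'
    constructor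
    · rintro ⟨h1, h2⟩
      funext t
      simp only [hW]
      by_cases ht : (j : ℕ) ≤ (t : ℕ)
      · rw [if_pos ht, if_pos ht]
        rcases eq_or_lt_of_le ht with he | hlt
        · have : t = j := Fin.ext he.symm
          rw [this]
          exact h1
        · have hlt' : (j : ℕ) + 1 ≤ (t : ℕ) := hlt
          have h2t := congrFun h2 t
          simp only [hW] at h2t
          rw [if_pos hlt', if_pos hlt'] at h2t
          exact h2t
      · rw [if_neg ht, if_neg ht]
    · intro h
      constructor
      · have hj := congrFun h j
        simp only [hW] at hj
        rw [if_pos (le_refl _), if_pos (le_refl _)] at hj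
        exact hj
      · funext t
        simp only [hW]
        by_cases ht : (j : ℕ) + 1 ≤ (t : ℕ)
        · rw [if_pos ht, if_pos ht]
          have hle : (j : ℕ) ≤ (t : ℕ) := by omega
          have h2t := congrFun h t
          simp only [hW] at h2t
          rw [if_pos hle, if_pos hle] at h2t
          exact h2t
        · rw [if_neg ht, if_neg ht]
  have hterm : ∀ j : Fin m, condMutInfo p (X j) M
      (fun ω => fun t : Fin m => if (j : ℕ) < (t : ℕ) then X t ω else 0)
      = f ((j : ℕ) + 1) - f (j : ℕ) := by
    intro j
    rw [hZW j]
    unfold condMutInfo condEnt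
    have e1 : ent p (fun ω => (X j ω, W ((j : ℕ) + 1) ω)) = ent p (W (j : ℕ)) := by
      apply ent_congr
      intro ω ω'
      rw [Prod.mk.injEq]
      exact hWcore j ω ω'
    have e3 : ent p (fun ω => (X j ω, (M ω, W ((j : ℕ) + 1) ω)))
        = ent p (fun ω => (M ω, W (j : ℕ) ω)) := by
      apply ent_congr
      intro ω ω'
      rw [Prod.mk.injEq, Prod.mk.injEq, Prod.mk.injEq]
      have hc := hWcore j ω ω'
      tauto
    rw [e1, e3]
    simp only [hf]
    ring
  have hWm_const : ∀ ω ω', W m ω = W m ω' := by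
    intro ω ω'
    funext t
    simp only [hW]
    rw [if_neg (by have := t.isLt; omega), if_neg (by have := t.isLt; omega)]
  have hsum1 : ∑ j : Fin m, condMutInfo p (X j) M
      (fun ω => fun t : Fin m => if (j : ℕ) < (t : ℕ) then X t ω else 0) = f m - f 0 := by
    rw [Finset.sum_congr rfl (fun j _ => hterm j)]
    rw [Fin.sum_univ_eq_sum_range (fun k => f (k + 1) - f k) m]
    exact Finset.sum_range_sub f m
  have hfm : f m = ent p M := by
    simp only [hf]
    rw [ent_const p hp1 (W m) hWm_const, sub_zero]
    exact ent_pair_left p M (W m) (fun ω ω' _ => hWm_const ω ω')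
  have hf0 : 0 ≤ f 0 := by
    simp only [hf]
    have := ent_snd_le p hp0 M (W 0)
    linarith
  have part1 : ∑ j : Fin m, condMutInfo p (X j) M
      (fun ω => fun t : Fin m => if (j : ℕ) < (t : ℕ) then X t ω else 0) ≤ ent p M := by
    rw [hsum1, hfm]
    linarith
  -- range facts
  have Ioc_def : ∀ j : Fin m, img (X j) ⊆ Finset.Ioc ((j : ℕ) * m) (((j : ℕ) + 1) * m) := by
    intro j a ha
    obtain ⟨ω, hω⟩ := exists_of_mem_img ha
    rw [← hω]
    exact Finset.mem_Ioc.mpr (hrange j ω)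
  have hcard_Ioc : ∀ j : Fin m, (Finset.Ioc ((j : ℕ) * m) (((j : ℕ) + 1) * m)).card = m := by
    intro j
    rw [Nat.card_Ioc, add_mul, one_mul]
    omega
  have hentXj : ∀ j : Fin m, ent p (X j) = Real.logb 2 m := by
    intro j
    have hm : 0 < m := j.pos
    have hm' : (m : ℝ) ≠ 0 := Nat.cast_ne_zero.mpr hm.ne'
    rw [ent_eq_sum_subset p (X j) (Ioc_def j)]
    have hstep : ∀ a ∈ Finset.Ioc ((j : ℕ) * m) (((j : ℕ) + 1) * m),
        -(pr p {ω | X j ω = a}) * Real.logb 2 (pr p {ω | X j ω = a})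
        = (1 / m) * Real.logb 2 m := by
      intro a ha
      rw [huniform j a (Finset.mem_Ioc.mp ha), one_div, Real.logb_inv]
      ring
    rw [Finset.sum_congr rfl hstep, Finset.sum_const, hcard_Ioc j, nsmul_eq_mul]
    field_simp
  -- the product formula for coordinatewise events
  have hprod : ∀ C : (∀ _ : Fin m, ℕ → Prop),
      pr p {ω | ∀ t, C t (X t ω)} = ∏ t, pr p {ω | C t (X t ω)} := by
    intro C
    have hsubV : img (fun ω => fun t : Fin m => X t ω)
        ⊆ Fintype.piFinset (fun t : Fin m => Finset.Ioc ((t : ℕ) * m) (((t : ℕ) + 1) * m)) := by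
      intro v hv
      obtain ⟨ω, hω⟩ := exists_of_mem_img hv
      rw [← hω, Fintype.mem_piFinset]
      intro t
      exact Finset.mem_Ioc.mpr (hrange t ω)
    have hconf : pr p {ω | ∀ t, C t (X t ω)}
        = ∑ v ∈ Fintype.piFinset (fun t : Fin m => Finset.Ioc ((t : ℕ) * m) (((t : ℕ) + 1) * m)),
          if (∀ t, C t (v t)) then pr p {ω | ∀ t, X t ω = v t} else 0 := by
      rw [pr_partition p (fun ω => fun t : Fin m => X t ω) {ω | ∀ t, C t (X t ω)}]
      rw [Finset.sum_subset hsubV ?hzero]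
      case hzero =>
        intro v _ hv
        have h0 := pr_fiber_zero p (fun ω => fun t : Fin m => X t ω) hv
        have hle := pr_mono p hp0
          (show {ω | ω ∈ {ω | ∀ t, C t (X t ω)} ∧ (fun t : Fin m => X t ω) = v}
            ⊆ {ω | (fun t : Fin m => X t ω) = v} from fun ω h => h.2)
        have hge := pr_nonneg p hp0 {ω | ω ∈ {ω | ∀ t, C t (X t ω)} ∧ (fun t : Fin m => X t ω) = v}
        rw [h0] at hle
        linarith
      refine Finset.sum_congr rfl fun v _ => ?_
      by_cases hC : ∀ t, C t (v t)
      · rw [if_pos hC]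
        congr 1
        ext ω
        simp only [Set.mem_setOf_eq]
        constructor
        · rintro ⟨-, h2⟩ t
          exact congrFun h2 t
        · intro h
          refine ⟨fun t => ?_, funext h⟩
          rw [h t]
          exact hC t
      · rw [if_neg hC]
        convert pr_empty p
        ext ω
        simp only [Set.mem_setOf_eq, Set.mem_empty_iff_false, iff_false, not_and]
        intro h1 h2
        exact hC (fun t => by rw [← congrFun h2 t]; exact h1 t)
    rw [hconf]
    rw [Finset.sum_congr rfl (fun v _ => by rw [hindep v] :
      ∀ v ∈ Fintype.piFinset (fun t : Fin m => Finset.Ioc ((t : ℕ) * m) (((t : ℕ) + 1) * m)),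
        (if (∀ t, C t (v t)) then pr p {ω | ∀ t, X t ω = v t} else 0)
        = (if (∀ t, C t (v t)) then ∏ t, pr p {ω | X t ω = v t} else 0))]
    rw [← Finset.sum_filter]
    have hfil : (Fintype.piFinset (fun t : Fin m => Finset.Ioc ((t : ℕ) * m) (((t : ℕ) + 1) * m))).filter
          (fun v => ∀ t, C t (v t))
        = Fintype.piFinset (fun t : Fin m =>
            (Finset.Ioc ((t : ℕ) * m) (((t : ℕ) + 1) * m)).filter (C t)) := by
      ext v
      simp only [Finset.mem_filter, Fintype.mem_piFinset]
      exact ⟨fun h t => ⟨h.1 t, h.2 t⟩, fun h => ⟨fun t => (h t).1, fun t => (h t).2⟩⟩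
    rw [hfil]
    have hps := Finset.prod_univ_sum
      (fun t : Fin m => (Finset.Ioc ((t : ℕ) * m) (((t : ℕ) + 1) * m)).filter (C t))
      (fun t b => pr p {ω | X t ω = b})
    rw [← hps]
    refine Finset.prod_congr rfl fun t _ => ?_
    exact (pr_pred' p (X t) (Ioc_def t) (C t)).symm
  have hXZindep : ∀ (j : Fin m) (a : ℕ) (z : Fin m → ℕ),
      pr p {ω | (X j ω, fun t : Fin m => if (j : ℕ) < (t : ℕ) then X t ω else 0) = (a, z)}
      = pr p {ω | X j ω = a}
        * pr p {ω | (fun t : Fin m => if (j : ℕ) < (t : ℕ) then X t ω else 0) = z} := by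
    intro j a z
    by_cases hz0 : ∀ t : Fin m, ¬((j : ℕ) < (t : ℕ)) → z t = 0
    · have key1 := hprod (fun t b => if (t : ℕ) = (j : ℕ) then b = a
        else if (j : ℕ) < (t : ℕ) then b = z t else True)
      have key2 := hprod (fun t b => if (j : ℕ) < (t : ℕ) then b = z t else True)
      have key3 := hprod (fun t b => if (t : ℕ) = (j : ℕ) then b = a else True)
      have hs1 : {ω | (X j ω, fun t : Fin m => if (j : ℕ) < (t : ℕ) then X t ω else 0) = (a, z)}
          = {ω | ∀ t : Fin m, if (t : ℕ) = (j : ℕ) then X t ω = a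
              else if (j : ℕ) < (t : ℕ) then X t ω = z t else True} := by
        ext ω
        simp only [Set.mem_setOf_eq, Prod.mk.injEq]
        constructor
        · rintro ⟨h1, h2⟩ t
          by_cases htj : (t : ℕ) = (j : ℕ)
          · rw [if_pos htj]
            have ht : t = j := Fin.ext htj
            rw [ht]
            exact h1
          · rw [if_neg htj]
            by_cases hlt : (j : ℕ) < (t : ℕ)
            · rw [if_pos hlt]
              have h2t := congrFun h2 t
              rw [if_pos hlt] at h2t
              exact h2t
            · rw [if_neg hlt]
              trivial
        · intro h
          constructor
          · have hj := h j
            rw [if_pos rfl] at hj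
            exact hj
          · funext t
            by_cases hlt : (j : ℕ) < (t : ℕ)
            · rw [if_pos hlt]
              have htj : ¬((t : ℕ) = (j : ℕ)) := by omega
              have ht := h t
              rw [if_neg htj, if_pos hlt] at ht
              exact ht
            · rw [if_neg hlt]
              exact (hz0 t hlt).symm
      have hs2 : {ω | (fun t : Fin m => if (j : ℕ) < (t : ℕ) then X t ω else 0) = z}
          = {ω | ∀ t : Fin m, if (j : ℕ) < (t : ℕ) then X t ω = z t else True} := by
        ext ω
        simp only [Set.mem_setOf_eq]
        constructor
        · intro h t
          by_cases hlt : (j : ℕ) < (t : ℕ)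
          · rw [if_pos hlt]
            have h2t := congrFun h t
            rw [if_pos hlt] at h2t
            exact h2t
          · rw [if_neg hlt]
            trivial
        · intro h
          funext t
          by_cases hlt : (j : ℕ) < (t : ℕ)
          · rw [if_pos hlt]
            have ht := h t
            rw [if_pos hlt] at ht
            exact ht
          · rw [if_neg hlt]
            exact (hz0 t hlt).symm
      have hs3 : {ω | X j ω = a}
          = {ω | ∀ t : Fin m, if (t : ℕ) = (j : ℕ) then X t ω = a else True} := by
        ext ω
        simp only [Set.mem_setOf_eq]
        constructor
        · intro h t
          by_cases htj : (t : ℕ) = (j : ℕ)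
          · rw [if_pos htj]
            have ht : t = j := Fin.ext htj
            rw [ht]
            exact h
          · rw [if_neg htj]
            trivial
        · intro h
          have hj := h j
          rw [if_pos rfl] at hj
          exact hj
      rw [hs1, hs2, hs3, key1, key2, key3, ← Finset.prod_mul_distrib]
      refine Finset.prod_congr rfl fun t _ => ?_
      by_cases htj : (t : ℕ) = (j : ℕ)
      · have hnlt : ¬((j : ℕ) < (t : ℕ)) := by omega
        have e1 : {ω | if (t : ℕ) = (j : ℕ) then X t ω = a
            else if (j : ℕ) < (t : ℕ) then X t ω = z t else True} = {ω | X t ω = a} := by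
          ext ω; simp only [Set.mem_setOf_eq]; rw [if_pos htj]
        have e2 : {ω | if (j : ℕ) < (t : ℕ) then X t ω = z t else True} = Set.univ := by
          ext ω; simp only [Set.mem_setOf_eq, Set.mem_univ]; rw [if_neg hnlt]
        have e3 : {ω | if (t : ℕ) = (j : ℕ) then X t ω = a else True} = {ω | X t ω = a} := by
          ext ω; simp only [Set.mem_setOf_eq]; rw [if_pos htj]
        rw [e1, e2, e3, pr_univ p hp1, mul_one]
      · by_cases hlt : (j : ℕ) < (t : ℕ)
        · have e1 : {ω | if (t : ℕ) = (j : ℕ) then X t ω = a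
              else if (j : ℕ) < (t : ℕ) then X t ω = z t else True} = {ω | X t ω = z t} := by
            ext ω; simp only [Set.mem_setOf_eq]; rw [if_neg htj, if_pos hlt]
          have e2 : {ω | if (j : ℕ) < (t : ℕ) then X t ω = z t else True} = {ω | X t ω = z t} := by
            ext ω; simp only [Set.mem_setOf_eq]; rw [if_pos hlt]
          have e3 : {ω | if (t : ℕ) = (j : ℕ) then X t ω = a else True} = Set.univ := by
            ext ω; simp only [Set.mem_setOf_eq, Set.mem_univ]; rw [if_neg htj]
          rw [e1, e2, e3, pr_univ p hp1, one_mul]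
        · have e1 : {ω | if (t : ℕ) = (j : ℕ) then X t ω = a
              else if (j : ℕ) < (t : ℕ) then X t ω = z t else True} = Set.univ := by
            ext ω; simp only [Set.mem_setOf_eq, Set.mem_univ]; rw [if_neg htj, if_neg hlt]
          have e2 : {ω | if (j : ℕ) < (t : ℕ) then X t ω = z t else True} = Set.univ := by
            ext ω; simp only [Set.mem_setOf_eq, Set.mem_univ]; rw [if_neg hlt]
          have e3 : {ω | if (t : ℕ) = (j : ℕ) then X t ω = a else True} = Set.univ := by
            ext ω; simp only [Set.mem_setOf_eq, Set.mem_univ]; rw [if_neg htj]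
          rw [e1, e2, e3, pr_univ p hp1, mul_one]
    · push_neg at hz0
      obtain ⟨t0, hle, hne0⟩ := hz0
      have hZempty : {ω | (fun t : Fin m => if (j : ℕ) < (t : ℕ) then X t ω else 0) = z} = ∅ := by
        ext ω
        simp only [Set.mem_setOf_eq, Set.mem_empty_iff_false, iff_false]
        intro h
        have h2t := congrFun h t0
        rw [if_neg (by omega : ¬((j : ℕ) < (t0 : ℕ)))] at h2t
        exact hne0 h2t.symm
      have hPempty : {ω | (X j ω, fun t : Fin m => if (j : ℕ) < (t : ℕ) then X t ω else 0)
          = (a, z)} = ∅ := by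
        ext ω
        simp only [Set.mem_setOf_eq, Set.mem_empty_iff_false, iff_false, Prod.mk.injEq, not_and]
        intro _ h
        have h2t := congrFun h t0
        rw [if_neg (by omega : ¬((j : ℕ) < (t0 : ℕ)))] at h2t
        exact hne0 h2t.symm
      rw [hPempty, hZempty]
      simp [pr_empty]
  have hcondZ : ∀ j : Fin m, condEnt p (X j)
      (fun ω => fun t : Fin m => if (j : ℕ) < (t : ℕ) then X t ω else 0) = Real.logb 2 m := by
    intro j
    unfold condEnt
    rw [ent_pair_of_indep p hp0 hp1 (X j) _ (fun a z => hXZindep j a z), hentXj j]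
    ring
  obtain ⟨ω0⟩ := hne
  have hFano : ∀ j : Fin m, condEnt p (X j)
      (fun ω => (M ω, fun t : Fin m => if (j : ℕ) < (t : ℕ) then X t ω else 0))
      ≤ 1 + δ * Real.logb 2 m := by
    intro j
    have hm : 0 < m := j.pos
    have hlogm : 0 ≤ Real.logb 2 m := Real.logb_nonneg one_lt_two (by exact_mod_cast hm)
    set Y : Ω → 𝓜 × (Fin m → ℕ) :=
      fun ω => (M ω, fun t : Fin m => if (j : ℕ) < (t : ℕ) then X t ω else 0) with hY
    set E : Ω → Bool := fun ω => decide (X' j ω = X j ω) with hE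
    have hYfunc : ∀ ω ω', Y ω = Y ω' → X' j ω = X' j ω' := by
      intro ω ω' h
      simp only [hY, Prod.mk.injEq] at h
      refine hfunc j ω ω' h.1 (fun t ht => ?_)
      have h2t := congrFun h.2 t
      rw [if_pos ht, if_pos ht] at h2t
      exact h2t
    have e2 : ent p (fun ω => (X j ω, Y ω)) = ent p (fun ω => (X j ω, (E ω, Y ω))) := by
      apply ent_congr
      intro ω ω'
      simp only [Prod.mk.injEq]
      constructor
      · rintro ⟨h1, h2⟩
        refine ⟨h1, ?_, h2⟩
        simp only [hE]
        apply decide_eq_decide.mpr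
        rw [h1, hYfunc ω ω' h2]
      · rintro ⟨h1, -, h2⟩
        exact ⟨h1, h2⟩
    have hdecomp : condEnt p (X j) Y
        = condEnt p (X j) (fun ω => (E ω, Y ω)) + (ent p (fun ω => (E ω, Y ω)) - ent p Y) := by
      unfold condEnt
      rw [← e2]
      ring
    have hE1 : ent p E ≤ 1 := by
      have h := ent_le_logb_card p hp0 hp1 E
      have hEcard : (img E).card ≤ 2 := by
        calc (img E).card ≤ (Finset.univ : Finset Bool).card :=
              Finset.card_le_card (Finset.subset_univ _)
          _ = 2 := by simp
      have hpos : (1 : ℝ) ≤ (img E).card := by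
        have hne' : (img E).Nonempty := ⟨E ω0, mem_img E ω0⟩
        exact_mod_cast Finset.card_pos.mpr hne'
      calc ent p E ≤ Real.logb 2 (img E).card := h
        _ ≤ Real.logb 2 2 := Real.logb_le_logb_of_le one_lt_two (by linarith)
            (by exact_mod_cast hEcard)
        _ = 1 := Real.logb_self_eq_one one_lt_two
    have hpairle : ent p (fun ω => (E ω, Y ω)) - ent p Y ≤ 1 := by
      have := ent_pair_le p hp0 hp1 E Y
      linarith
    have hcond2 : condEnt p (X j) (fun ω => (E ω, Y ω)) ≤ δ * Real.logb 2 m := by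
      have hL := condEnt_le_sum p hp0 (X j) (fun ω => (E ω, Y ω))
      have hstep : ∀ b ∈ img (fun ω => (E ω, Y ω)),
          pr p {ω | (E ω, Y ω) = b} * Real.logb 2
            ((@Finset.filter _ (fun x => x.2 = b) (fun a => Classical.propDecidable (a.2 = b)) (img (fun ω => (X j ω, (E ω, Y ω))))).card)
          ≤ pr p {ω | (E ω, Y ω) = b} * (if b.1 = true then 0 else Real.logb 2 m) := by
        intro b _
        apply mul_le_mul_of_nonneg_left _ (pr_nonneg p hp0 _)
        by_cases hb : b.1 = true
        · rw [if_pos hb]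
          have hcard1 : (@Finset.filter _ (fun x => x.2 = b) (fun a => Classical.propDecidable (a.2 = b)) (img (fun ω => (X j ω, (E ω, Y ω))))).card ≤ 1 := by
            apply Finset.card_le_one.mpr
            intro x hx x' hx'
            obtain ⟨hx1, hx2⟩ := mem_filter'.mp hx
            obtain ⟨hx1', hx2'⟩ := mem_filter'.mp hx'
            obtain ⟨ω, hω⟩ := exists_of_mem_img hx1
            obtain ⟨ω', hω'⟩ := exists_of_mem_img hx1'
            have hbω : (E ω, Y ω) = b := by rw [← hx2, ← hω]
            have hbω' : (E ω', Y ω') = b := by rw [← hx2', ← hω']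
            have hEω : E ω = true := by rw [← hb, ← hbω]
            have hEω' : E ω' = true := by rw [← hb, ← hbω']
            have hYeq : Y ω = Y ω' := by
              have := hbω.trans hbω'.symm
              exact (Prod.mk.injEq _ _ _ _ ▸ this).2
            simp only [hE, decide_eq_true_eq] at hEω hEω'
            have hX'eq := hYfunc ω ω' hYeq
            have hXeq : X j ω = X j ω' := by rw [← hEω, ← hEω', hX'eq]
            rw [← hω, ← hω', hXeq, hYeq]
            simp only [hE]
            rw [hX'eq, hXeq]
          rcases Nat.le_one_iff_eq_zero_or_eq_one.mp hcard1 with h | h <;> rw [h] <;> simp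
        · rw [if_neg hb]
          have hsubm : (@Finset.filter _ (fun x => x.2 = b) (fun a => Classical.propDecidable (a.2 = b)) (img (fun ω => (X j ω, (E ω, Y ω)))))
              ⊆ (Finset.Ioc ((j : ℕ) * m) (((j : ℕ) + 1) * m)) ×ˢ ({b} : Finset _) := by
            intro x hx
            obtain ⟨hx1, hx2⟩ := mem_filter'.mp hx
            obtain ⟨ω, hω⟩ := exists_of_mem_img hx1
            rw [Finset.mem_product]
            constructor
            · rw [← hω]
              exact Finset.mem_Ioc.mpr (hrange j ω)
            · simp [hx2]
          have hcardm : (@Finset.filter _ (fun x => x.2 = b) (fun a => Classical.propDecidable (a.2 = b)) (img (fun ω => (X j ω, (E ω, Y ω))))).card ≤ m := by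
            calc _ ≤ ((Finset.Ioc ((j : ℕ) * m) (((j : ℕ) + 1) * m)) ×ˢ ({b} : Finset _)).card :=
                  Finset.card_le_card hsubm
              _ = m := by rw [Finset.card_product, Finset.card_singleton, hcard_Ioc j, mul_one]
          rcases Nat.eq_zero_or_pos (@Finset.filter _ (fun x => x.2 = b) (fun a => Classical.propDecidable (a.2 = b)) (img (fun ω => (X j ω, (E ω, Y ω))))).card with h | h
          · rw [h]
            simpa using hlogm
          · exact Real.logb_le_logb_of_le one_lt_two (by exact_mod_cast h) (by exact_mod_cast hcardm)
      have hsplit : ∑ b ∈ img (fun ω => (E ω, Y ω)),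
          pr p {ω | (E ω, Y ω) = b} * (if b.1 = true then 0 else Real.logb 2 m)
          ≤ δ * Real.logb 2 m := by
        have heq1 : ∀ b, pr p {ω | (E ω, Y ω) = b} * (if b.1 = true then 0 else Real.logb 2 m)
            = (if b.1 = true then 0 else pr p {ω | (E ω, Y ω) = b} * Real.logb 2 m) := by
          intro b
          by_cases hb : b.1 = true
          · rw [if_pos hb, if_pos hb, mul_zero]
          · rw [if_neg hb, if_neg hb]
        rw [Finset.sum_congr rfl (fun b _ => heq1 b), Finset.sum_ite, Finset.sum_const,
          smul_zero, zero_add, ← Finset.sum_mul]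
        have hpr : ∑ b ∈ (img (fun ω => (E ω, Y ω))).filter (fun b => ¬(b.1 = true)),
            pr p {ω | (E ω, Y ω) = b} = pr p {ω | ¬((E ω, Y ω).1 = true)} := by
          rw [pr_event_partition p (fun ω => (E ω, Y ω)) (fun b => ¬(b.1 = true))]
          apply Finset.sum_congr _ (fun _ _ => rfl)
          ext b
          simp only [mem_filter']
        rw [hpr]
        have hprcompl : pr p {ω | ¬((E ω, Y ω).1 = true)} ≤ δ := by
          have h1 : {ω | ¬((E ω, Y ω).1 = true)} = {ω | ¬(E ω = true)} := rfl
          rw [h1, pr_compl p hp1 (fun ω => E ω = true)]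
          have h2 : pr p {ω | E ω = true} = pr p {ω | X' j ω = X j ω} := by
            congr 1
            ext ω
            simp [hE]
          rw [h2]
          have := hguess j
          linarith
        exact mul_le_mul_of_nonneg_right hprcompl hlogm
      calc condEnt p (X j) (fun ω => (E ω, Y ω))
          ≤ ∑ b ∈ img (fun ω => (E ω, Y ω)), pr p {ω | (E ω, Y ω) = b} * Real.logb 2
            ((@Finset.filter _ (fun x => x.2 = b) (fun a => Classical.propDecidable (a.2 = b)) (img (fun ω => (X j ω, (E ω, Y ω))))).card) := hL
        _ ≤ ∑ b ∈ img (fun ω => (E ω, Y ω)),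
            pr p {ω | (E ω, Y ω) = b} * (if b.1 = true then 0 else Real.logb 2 m) :=
            Finset.sum_le_sum hstep
        _ ≤ δ * Real.logb 2 m := hsplit
    rw [hdecomp]
    linarith
  have hIlow : ∀ j : Fin m, (1 - δ) * Real.logb 2 m - 1 ≤ condMutInfo p (X j) M
      (fun ω => fun t : Fin m => if (j : ℕ) < (t : ℕ) then X t ω else 0) := by
    intro j
    unfold condMutInfo
    rw [hcondZ j]
    have := hFano j
    linarith
  have part2 : (m : ℝ) * ((1 - δ) * Real.logb 2 m - 1) ≤
      ∑ j : Fin m, condMutInfo p (X j) M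
        (fun ω => fun t : Fin m => if (j : ℕ) < (t : ℕ) then X t ω else 0) := by
    have h := Finset.sum_le_sum (fun j (_ : j ∈ Finset.univ) => hIlow j)
    rw [Finset.sum_const, Finset.card_univ, Fintype.card_fin, nsmul_eq_mul] at h
    exact h
  have part3 : ent p M ≤ Real.logb 2 (Fintype.card 𝓜) := by
    have h := ent_le_logb_card p hp0 hp1 M
    have h1 : (1 : ℝ) ≤ (img M).card := by
      have hne' : (img M).Nonempty := ⟨M ω0, mem_img M ω0⟩
      exact_mod_cast Finset.card_pos.mpr hne'
    calc ent p M ≤ Real.logb 2 (img M).card := h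
      _ ≤ Real.logb 2 (Fintype.card 𝓜) := by
          apply Real.logb_le_logb_of_le one_lt_two (by linarith)
          have := Finset.card_le_card (Finset.subset_univ (img M))
          rw [Finset.card_univ] at this
          exact_mod_cast this
  exact ⟨part1, part2, by linarith⟩
end
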